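/- arXiv:2603.22079 — 9 statements merged into one kernel-verified Lean document; each statement's English description precedes it below -/
import Mathlib

section
/- Let (M,d) be a metric space, μ a σ-finite Borel measure on M, and k a kernel on M that is a countable sum of finite kernels. Then for every strictly positive measurable probability density f : M → (0,∞) with respect to μ satisfying i_k(f) < ∞, one has i_{k⊕k}(f⊗f) = 2·i_k(f), where (f⊗f)(x,y) = f(x)f(y). -/
open MeasureTheory ENNReal

noncomputable def Upsilon (r : ℝ) : ℝ := Real.exp r - 1 - r

noncomputable def PsiUpsilon {M : Type*} [MeasurableSpace M]
    (k : M → Measure M) (f : M → ℝ) (x : M) : ℝ≥0∞ :=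
  ∫⁻ y in {x}ᶜ, ENNReal.ofReal (Upsilon (f y - f x)) ∂(k x)

noncomputable def nlFisher {M : Type*} [MeasurableSpace M]
    (μ : Measure M) (k : M → Measure M) (f : M → ℝ) : ℝ≥0∞ :=
  ∫⁻ x, ENNReal.ofReal (f x) * PsiUpsilon k (fun y => Real.log (f y)) x ∂μ

noncomputable def tensorKernel {M₁ M₂ : Type*} [MeasurableSpace M₁] [MeasurableSpace M₂]
    (k₁ : M₁ → Measure M₁) (k₂ : M₂ → Measure M₂) : M₁ × M₂ → Measure (M₁ × M₂) :=
  fun p => (k₁ p.1).map (fun u => (u, p.2)) + (k₂ p.2).map (fun v => (p.1, v))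

lemma measurable_Upsilon : Measurable Upsilon :=
  (Real.measurable_exp.sub measurable_const).sub measurable_id

lemma Upsilon_zero : Upsilon 0 = 0 := by simp [Upsilon]

lemma setLIntegral_compl_singleton {M : Type*} [MeasurableSpace M]
    [MeasurableSingletonClass M] (ν : Measure M) (x : M) (h : M → ℝ≥0∞)
    (hm : Measurable h) (hx : h x = 0) :
    ∫⁻ y in {x}ᶜ, h y ∂ν = ∫⁻ y, h y ∂ν := by
  conv_rhs => rw [← lintegral_add_compl h (measurableSet_singleton x)]
  simp [lintegral_dirac' x hm, hx]

/-- Lifting property (tensorization identity) of the nonlocal Fisher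
information: for a kernel `k` that is a countable sum of finite kernels (i.e. s-finite),
a σ-finite measure `μ` and a strictly positive measurable probability density `f` with
`i_k(f) < ∞`, one has `i_{k⊕k}(f⊗f) = 2 i_k(f)`. -/
theorem nlFisher_tensor_eq
    {M : Type*} [MetricSpace M] [MeasurableSpace M] [BorelSpace M]
    (μ : Measure M) [SigmaFinite μ]
    (k : ProbabilityTheory.Kernel M M) [ProbabilityTheory.IsSFiniteKernel k]
    (f : M → ℝ) (hf : Measurable f) (hfpos : ∀ x, 0 < f x)
    (hdens : ∫⁻ x, ENNReal.ofReal (f x) ∂μ = 1)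
    (hfin : nlFisher μ (fun x => k x) f < ⊤) :
    nlFisher (μ.prod μ) (tensorKernel (fun x => k x) (fun x => k x))
        (fun p => f p.1 * f p.2)
      = 2 * nlFisher μ (fun x => k x) f := by
  set a : M → ℝ≥0∞ := fun x => ENNReal.ofReal (f x) with ha
  set g : M → ℝ := fun x => Real.log (f x) with hg
  set P : M → ℝ≥0∞ := PsiUpsilon (fun x => k x) g with hP
  have hgm : Measurable g := hf.log
  have ham : Measurable a := hf.ennreal_ofReal
  -- the uncurried integrand
  have hGm : Measurable (fun q : M × M => ENNReal.ofReal (Upsilon (g q.2 - g q.1))) :=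
    (measurable_Upsilon.comp ((hgm.comp measurable_snd).sub (hgm.comp measurable_fst))).ennreal_ofReal
  have hPfull : ∀ x, P x = ∫⁻ y, ENNReal.ofReal (Upsilon (g y - g x)) ∂(k x) := by
    intro x
    rw [hP]
    unfold PsiUpsilon
    exact setLIntegral_compl_singleton _ x _
      ((measurable_Upsilon.comp ((hgm.sub measurable_const))).ennreal_ofReal)
      (by simp [Upsilon_zero])
  have hPm : Measurable P := by
    have := Measurable.lintegral_kernel_prod_right (κ := k)
      (f := fun x y => ENNReal.ofReal (Upsilon (g y - g x))) hGm
    simpa [← hPfull] using this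
  -- pointwise identity for the tensor Psi
  have hlog : ∀ u v : M, Real.log (f u * f v) = g u + g v := fun u v =>
    Real.log_mul (hfpos u).ne' (hfpos v).ne'
  have key : ∀ x y : M,
      PsiUpsilon (tensorKernel (fun x => k x) (fun x => k x))
        (fun p : M × M => Real.log (f p.1 * f p.2)) (x, y) = P x + P y := by
    intro x y
    have hsing : MeasurableSet ({(x, y)} : Set (M × M)) := by
      rw [show ({(x, y)} : Set (M × M)) = {x} ×ˢ {y} by simp]
      exact (measurableSet_singleton x).prod (measurableSet_singleton y)
    have hFm : Measurable (fun q : M × M =>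
        ENNReal.ofReal (Upsilon (Real.log (f q.1 * f q.2) - Real.log (f x * f y)))) := by
      apply Measurable.ennreal_ofReal
      exact measurable_Upsilon.comp
        (((hf.comp measurable_fst).mul (hf.comp measurable_snd)).log.sub measurable_const)
    unfold PsiUpsilon tensorKernel
    dsimp only
    rw [Measure.restrict_add, lintegral_add_measure,
      setLIntegral_map hsing.compl hFm measurable_prodMk_right,
      setLIntegral_map hsing.compl hFm measurable_prodMk_left]
    have h1 : (fun u : M => (u, y)) ⁻¹' ({(x, y)} : Set (M × M))ᶜ = ({x} : Set M)ᶜ := by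
      ext u; simp [Prod.ext_iff]
    have h2 : (fun v : M => (x, v)) ⁻¹' ({(x, y)} : Set (M × M))ᶜ = ({y} : Set M)ᶜ := by
      ext v; simp [Prod.ext_iff]
    rw [h1, h2]
    congr 1
    · refine setLIntegral_congr_fun (measurableSet_singleton x).compl ?_
      intro u _
      simp only [hlog]
      ring_nf
    · refine setLIntegral_congr_fun (measurableSet_singleton y).compl ?_
      intro v _
      simp only [hlog]
      ring_nf
  -- now the main computation
  set I : ℝ≥0∞ := nlFisher μ (fun x => k x) f with hI
  have step : nlFisher (μ.prod μ) (tensorKernel (fun x => k x) (fun x => k x))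
      (fun p => f p.1 * f p.2)
      = ∫⁻ p : M × M, (a p.1 * P p.1) * a p.2 + a p.1 * (a p.2 * P p.2) ∂(μ.prod μ) := by
    unfold nlFisher
    refine lintegral_congr fun p => ?_
    obtain ⟨x, y⟩ := p
    rw [key x y, ENNReal.ofReal_mul (hfpos x).le]
    show a x * a y * (P x + P y) = _
    ring
  rw [step]
  have hmeas : Measurable (fun p : M × M => (a p.1 * P p.1) * a p.2 + a p.1 * (a p.2 * P p.2)) := by
    exact (((ham.comp measurable_fst).mul (hPm.comp measurable_fst)).mul
      (ham.comp measurable_snd)).add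
      ((ham.comp measurable_fst).mul ((ham.comp measurable_snd).mul (hPm.comp measurable_snd)))
  rw [lintegral_prod _ hmeas.aemeasurable]
  have inner : ∀ x, (∫⁻ y, (a x * P x) * a y + a x * (a y * P y) ∂μ)
      = a x * P x + a x * I := by
    intro x
    rw [lintegral_add_left (f := fun y => a x * P x * a y) (measurable_const.mul ham),
      lintegral_const_mul _ ham, lintegral_const_mul (f := fun y => a y * P y) _ (ham.mul hPm), hdens, mul_one]
    rfl
  simp_rw [inner]
  rw [lintegral_add_left (f := fun x => a x * P x) (ham.mul hPm), lintegral_mul_const _ ham, hdens, one_mul, two_mul]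
  rfl
end

section
/- Let (M,d) be a metric space, μ a σ-finite Borel measure on M, and k a kernel on M that is a countable sum of finite kernels. Let F : M×M → (0,∞) be a measurable symmetric probability density with respect to μ⊗μ (i.e., F(x,y) = F(y,x) for all x,y) such that i_{k⊕k}(F) < ∞ and i_k(Π_μ F) < ∞, where Π_μ F(x) = ∫_M F(x,y) dμ(y). Then i_{k⊕k}(F) ≥ 2·i_k(Π_μ F). -/
open MeasureTheory ENNReal

lemma Upsilon_nonneg (r : ℝ) : 0 ≤ Upsilon r := by
  have := Real.add_one_le_exp r
  simp only [Upsilon]; linarith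

lemma mul_Upsilon_log {a b : ℝ} (ha : 0 < a) (hb : 0 < b) :
    a * Upsilon (Real.log b - Real.log a) = b - a - a * (Real.log b - Real.log a) := by
  have h : Real.exp (Real.log b - Real.log a) = b / a := by
    rw [Real.exp_sub, Real.exp_log hb, Real.exp_log ha]
  rw [Upsilon, h]
  field_simp

lemma sq_sqrt_sub_le {a b : ℝ} (ha : 0 < a) (hb : 0 < b) :
    (Real.sqrt b - Real.sqrt a) ^ 2 ≤ a * Upsilon (Real.log b - Real.log a) := by
  rw [mul_Upsilon_log ha hb]
  have hsa : 0 < Real.sqrt a := Real.sqrt_pos.2 ha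
  have hsb : 0 < Real.sqrt b := Real.sqrt_pos.2 hb
  have ha2 : Real.sqrt a ^ 2 = a := Real.sq_sqrt ha.le
  have hb2 : Real.sqrt b ^ 2 = b := Real.sq_sqrt hb.le
  have h1 : Real.log (Real.sqrt b / Real.sqrt a) ≤ Real.sqrt b / Real.sqrt a - 1 :=
    Real.log_le_sub_one_of_pos (by positivity)
  have h2 : Real.log (Real.sqrt b / Real.sqrt a) = (Real.log b - Real.log a) / 2 := by
    rw [Real.log_div hsb.ne' hsa.ne', Real.log_sqrt hb.le, Real.log_sqrt ha.le]
    ring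
  have h3 : Real.log b - Real.log a ≤ 2 * (Real.sqrt b / Real.sqrt a) - 2 := by
    rw [h2] at h1; linarith
  have h4 : a * (Real.log b - Real.log a) ≤ a * (2 * (Real.sqrt b / Real.sqrt a) - 2) :=
    mul_le_mul_of_nonneg_left h3 ha.le
  have hdiv : a / Real.sqrt a = Real.sqrt a := Real.div_sqrt
  have h5 : a * (2 * (Real.sqrt b / Real.sqrt a) - 2) = 2 * Real.sqrt a * Real.sqrt b - 2 * a := by
    have : a * (2 * (Real.sqrt b / Real.sqrt a) - 2) = 2 * (a / Real.sqrt a) * Real.sqrt b - 2 * a := by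
      ring
    rw [this, hdiv]
  nlinarith [h4, h5, ha2, hb2]

lemma key_jensen {M : Type*} [MeasurableSpace M] (μ : Measure M)
    {f g : M → ℝ} (hf : Measurable f) (hg : Measurable g)
    (hfpos : ∀ y, 0 < f y) (hgpos : ∀ y, 0 < g y) :
    ENNReal.ofReal ((∫ y, f y ∂μ) * Upsilon (Real.log (∫ y, g y ∂μ) - Real.log (∫ y, f y ∂μ)))
      ≤ ∫⁻ y, ENNReal.ofReal (f y * Upsilon (Real.log (g y) - Real.log (f y))) ∂μ := by
  by_cases hfi : Integrable f μ
  swap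
  · rw [integral_undef hfi]; simp
  rcases (integral_nonneg (f := f) fun y => (hfpos y).le).eq_or_lt with h0 | hApos
  · rw [← h0]; simp
  set A := ∫ y, f y ∂μ with hA
  set B := ∫ y, g y ∂μ with hB
  have hfnn : (0:M→ℝ) ≤ᵐ[μ] f := Filter.Eventually.of_forall fun y => (hfpos y).le
  have hgnn : (0:M→ℝ) ≤ᵐ[μ] g := Filter.Eventually.of_forall fun y => (hgpos y).le
  have hfl : ∫⁻ y, ENNReal.ofReal (f y) ∂μ ≠ ⊤ :=
    ((hasFiniteIntegral_iff_ofReal hfnn).1 hfi.hasFiniteIntegral).ne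
  have msq : Measurable fun y => ENNReal.ofReal ((Real.sqrt (g y) - Real.sqrt (f y)) ^ 2) :=
    ((hg.sqrt.sub hf.sqrt).pow_const 2).ennreal_ofReal
  by_cases hgi : Integrable g μ
  swap
  · -- non-integrable g: RHS is infinite
    have hgl : ∫⁻ y, ENNReal.ofReal (g y) ∂μ = ⊤ := by
      by_contra hne
      exact hgi ⟨hg.aestronglyMeasurable,
        (hasFiniteIntegral_iff_ofReal hgnn).2 (lt_top_iff_ne_top.2 hne)⟩
    have hsqtop : ∫⁻ y, ENNReal.ofReal ((Real.sqrt (g y) - Real.sqrt (f y)) ^ 2) ∂μ = ⊤ := by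
      by_contra hne
      have hle : ∀ y, ENNReal.ofReal (g y)
          ≤ 2 * ENNReal.ofReal ((Real.sqrt (g y) - Real.sqrt (f y)) ^ 2)
            + 2 * ENNReal.ofReal (f y) := by
        intro y
        have hr : g y ≤ 2 * (Real.sqrt (g y) - Real.sqrt (f y)) ^ 2 + 2 * f y := by
          nlinarith [Real.sq_sqrt (hgpos y).le, Real.sq_sqrt (hfpos y).le,
            sq_nonneg (Real.sqrt (g y) - 2 * Real.sqrt (f y))]
        calc ENNReal.ofReal (g y)
            ≤ ENNReal.ofReal (2 * (Real.sqrt (g y) - Real.sqrt (f y)) ^ 2 + 2 * f y) :=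
              ENNReal.ofReal_le_ofReal hr
          _ ≤ _ := by
              rw [ENNReal.ofReal_add (mul_nonneg (by norm_num) (sq_nonneg _)) (mul_nonneg (by norm_num) (hfpos y).le),
                ENNReal.ofReal_mul (by norm_num), ENNReal.ofReal_mul (by norm_num)]
              simp [ENNReal.ofReal_ofNat]
      have hsum : ∫⁻ y, ENNReal.ofReal (g y) ∂μ
          ≤ 2 * ∫⁻ y, ENNReal.ofReal ((Real.sqrt (g y) - Real.sqrt (f y)) ^ 2) ∂μ
            + 2 * ∫⁻ y, ENNReal.ofReal (f y) ∂μ := by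
        calc ∫⁻ y, ENNReal.ofReal (g y) ∂μ
            ≤ ∫⁻ y, (2 * ENNReal.ofReal ((Real.sqrt (g y) - Real.sqrt (f y)) ^ 2)
              + 2 * ENNReal.ofReal (f y)) ∂μ := lintegral_mono hle
          _ = _ := by
              rw [lintegral_add_left (msq.const_mul 2), lintegral_const_mul 2 msq,
                lintegral_const_mul 2 hf.ennreal_ofReal]
      rw [hgl] at hsum
      have hfin : 2 * ∫⁻ y, ENNReal.ofReal ((Real.sqrt (g y) - Real.sqrt (f y)) ^ 2) ∂μ
          + 2 * ∫⁻ y, ENNReal.ofReal (f y) ∂μ ≠ ⊤ := by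
        refine ENNReal.add_ne_top.2 ⟨?_, ?_⟩ <;>
          exact ENNReal.mul_ne_top (by norm_num) (by assumption)
      exact hfin (top_le_iff.1 hsum)
    have htop : (⊤:ℝ≥0∞) ≤ ∫⁻ y, ENNReal.ofReal (f y * Upsilon (Real.log (g y) - Real.log (f y))) ∂μ := by
      rw [← hsqtop]
      exact lintegral_mono fun y => ENNReal.ofReal_le_ofReal (sq_sqrt_sub_le (hfpos y) (hgpos y))
    exact le_top.trans htop
  -- both integrable
  have hμ : μ ≠ 0 := by
    intro h
    rw [hA, h] at hApos
    simp at hApos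
  have hBpos : 0 < B := by
    rw [hB]
    refine (integral_pos_iff_support_of_nonneg (fun y => (hgpos y).le) hgi).2 ?_
    have hsupp : Function.support g = Set.univ :=
      Set.eq_univ_of_forall fun y => (hgpos y).ne'
    rw [hsupp]
    exact Measure.measure_univ_pos.2 hμ
  set h : M → ℝ := fun y => f y * Upsilon (Real.log (g y) - Real.log (f y)) with hh
  have hhmeas : Measurable h :=
    hf.mul (measurable_Upsilon.comp (hg.log.sub hf.log))
  have hhnn : (0:M→ℝ) ≤ᵐ[μ] h := Filter.Eventually.of_forall fun y =>
    mul_nonneg (hfpos y).le (Upsilon_nonneg _)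
  by_cases htop : ∫⁻ y, ENNReal.ofReal (h y) ∂μ = ⊤
  · rw [htop]; exact le_top
  have hhint : Integrable h μ := ⟨hhmeas.aestronglyMeasurable,
    (hasFiniteIntegral_iff_ofReal hhnn).2 (lt_top_iff_ne_top.2 htop)⟩
  -- the real inequality
  have hheq : ∀ y, h y = (g y - f y) - f y * (Real.log (g y) - Real.log (f y)) := by
    intro y
    rw [hh]
    exact mul_Upsilon_log (hfpos y) (hgpos y)
  set ψ : M → ℝ := fun y => f y * (Real.log (g y) - Real.log (f y)) with hψ
  have hψeq : ψ = fun y => (g y - f y) - h y := by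
    funext y
    rw [hheq y]; ring
  have hψint : Integrable ψ μ := by
    rw [hψeq]
    exact (hgi.sub hfi).sub hhint
  set c := Real.log B - Real.log A with hc
  have hptwise : ∀ y, ψ y - c * f y ≤ (A / B) * g y - f y := by
    intro y
    have hs : 0 < g y * A / (f y * B) :=
      div_pos (mul_pos (hgpos y) hApos) (mul_pos (hfpos y) hBpos)
    have h1 : Real.log (g y * A / (f y * B)) ≤ g y * A / (f y * B) - 1 :=
      Real.log_le_sub_one_of_pos hs
    have h2 : Real.log (g y * A / (f y * B))
        = Real.log (g y) - Real.log (f y) - c := by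
      rw [hc, Real.log_div (mul_pos (hgpos y) hApos).ne' (mul_pos (hfpos y) hBpos).ne',
        Real.log_mul (hgpos y).ne' hApos.ne', Real.log_mul (hfpos y).ne' hBpos.ne']
      ring
    have h3 : f y * (Real.log (g y) - Real.log (f y) - c)
        ≤ f y * (g y * A / (f y * B) - 1) := by
      rw [← h2]
      exact mul_le_mul_of_nonneg_left h1 (hfpos y).le
    have h4 : f y * (g y * A / (f y * B) - 1) = (A / B) * g y - f y := by
      field_simp [(hfpos y).ne', hBpos.ne']
    rw [h4] at h3
    calc ψ y - c * f y = f y * (Real.log (g y) - Real.log (f y) - c) := by rw [hψ]; ring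
      _ ≤ (A / B) * g y - f y := h3
  have hint1 : Integrable (fun y => ψ y - c * f y) μ := hψint.sub (hfi.const_mul c)
  have hint2 : Integrable (fun y => (A / B) * g y - f y) μ := (hgi.const_mul _).sub hfi
  have hmono := integral_mono hint1 hint2 hptwise
  rw [integral_sub hψint (hfi.const_mul c), integral_sub (hgi.const_mul _) hfi,
    integral_const_mul, integral_const_mul, ← hA, ← hB] at hmono
  have hAB : A / B * B = A := div_mul_cancel₀ A hBpos.ne'
  have hψle : ∫ y, ψ y ∂μ ≤ c * A := by
    rw [hAB] at hmono; linarith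
  have hinth : ∫ y, h y ∂μ = (B - A) - ∫ y, ψ y ∂μ := by
    have : (fun y => h y) = fun y => (g y - f y) - ψ y := by
      funext y; rw [hheq y, hψ]
    have h1 : ∫ y, (g y - f y) - ψ y ∂μ = (∫ y, g y - f y ∂μ) - ∫ y, ψ y ∂μ :=
      integral_sub (hgi.sub hfi) hψint
    have h2 : ∫ y, g y - f y ∂μ = (∫ y, g y ∂μ) - ∫ y, f y ∂μ := integral_sub hgi hfi
    rw [this, h1, h2, ← hA, ← hB]
  have hkey : A * Upsilon (Real.log B - Real.log A) ≤ ∫ y, h y ∂μ := by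
    rw [mul_Upsilon_log hApos hBpos, hinth]
    have : A * (Real.log B - Real.log A) = c * A := by rw [hc]; ring
    linarith [hψle, this]
  calc ENNReal.ofReal (A * Upsilon (Real.log B - Real.log A))
      ≤ ENNReal.ofReal (∫ y, h y ∂μ) := ENNReal.ofReal_le_ofReal hkey
    _ = ∫⁻ y, ENNReal.ofReal (h y) ∂μ := ofReal_integral_eq_lintegral_ofReal hhint hhnn

lemma PsiUpsilon_eq_lintegral {M : Type*} [MeasurableSpace M] [MeasurableSingletonClass M]
    (k : M → Measure M) (f : M → ℝ) (x : M) :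
    PsiUpsilon k f x = ∫⁻ y, ENNReal.ofReal (Upsilon (f y - f x)) ∂(k x) := by
  have h := lintegral_add_compl (μ := k x)
    (fun y => ENNReal.ofReal (Upsilon (f y - f x))) (MeasurableSet.singleton x)
  rw [PsiUpsilon, ← h, lintegral_singleton]
  simp [Upsilon]

/-- Lifting property (projection inequality) of the nonlocal Fisher
information: for a symmetric strictly positive probability density `F` on `M × M` with
`i_{k⊕k}(F) < ∞` and `i_k(Π_μ F) < ∞`, one has `i_{k⊕k}(F) ≥ 2 i_k(Π_μ F)`. -/
theorem nlFisher_projection_ge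
    {M : Type*} [MetricSpace M] [MeasurableSpace M] [BorelSpace M]
    (μ : Measure M) [SigmaFinite μ]
    (k : ProbabilityTheory.Kernel M M) [ProbabilityTheory.IsSFiniteKernel k]
    (F : M × M → ℝ) (hF : Measurable F) (hFpos : ∀ p, 0 < F p)
    (hFsymm : ∀ x y, F (x, y) = F (y, x))
    (hdens : ∫⁻ p, ENNReal.ofReal (F p) ∂(μ.prod μ) = 1)
    (hfinProd : nlFisher (μ.prod μ)
        (tensorKernel (fun x => k x) (fun x => k x)) F < ⊤)
    (hfinProj : nlFisher μ (fun x => k x) (fun x => ∫ y, F (x, y) ∂μ) < ⊤) :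
    nlFisher (μ.prod μ) (tensorKernel (fun x => k x) (fun x => k x)) F
      ≥ 2 * nlFisher μ (fun x => k x) (fun x => ∫ y, F (x, y) ∂μ) := by
  haveI : MeasurableSingletonClass M := ⟨fun a => isClosed_singleton.measurableSet⟩
  set κ : ProbabilityTheory.Kernel (M × M) M := k.comap Prod.fst measurable_fst with hκ
  have hκap : ∀ p : M × M, κ p = k p.1 := fun p =>
    ProbabilityTheory.Kernel.comap_apply k measurable_fst p
  set T : M × M → ℝ≥0∞ := fun p =>
    ∫⁻ u, ENNReal.ofReal (F p * Upsilon (Real.log (F (u, p.2)) - Real.log (F p))) ∂(k p.1)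
    with hT
  have hTmeas : Measurable T := by
    have hm : Measurable fun q : (M × M) × M =>
        ENNReal.ofReal (F q.1 * Upsilon (Real.log (F (q.2, q.1.2)) - Real.log (F q.1))) := by
      apply Measurable.ennreal_ofReal
      exact (hF.comp measurable_fst).mul (measurable_Upsilon.comp
        (((hF.comp (measurable_snd.prodMk measurable_fst.snd)).log).sub
          ((hF.comp measurable_fst).log)))
    have h2 := Measurable.lintegral_kernel_prod_right' (κ := κ) hm
    simpa only [hκap] using h2
  have mUps : ∀ p : M × M, Measurable fun q : M × M =>
      ENNReal.ofReal (Upsilon (Real.log (F q) - Real.log (F p))) := fun p =>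
    (measurable_Upsilon.comp (hF.log.sub_const _)).ennreal_ofReal
  have hdecomp : ∀ p : M × M, ENNReal.ofReal (F p)
      * PsiUpsilon (tensorKernel (fun x => k x) (fun x => k x)) (fun q => Real.log (F q)) p
      = T p + T p.swap := by
    rintro ⟨x, y⟩
    rw [PsiUpsilon_eq_lintegral]
    have htk : tensorKernel (fun x => k x) (fun x => k x) (x, y)
        = (k x).map (fun u => (u, y)) + (k y).map (fun v => (x, v)) := rfl
    have hm1 : Measurable fun u : M => (u, y) := measurable_id.prodMk measurable_const
    have hm2 : Measurable fun v : M => (x, v) := measurable_const.prodMk measurable_id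
    rw [htk, lintegral_add_measure,
      lintegral_map (mUps (x, y)) hm1,
      lintegral_map (mUps (x, y)) hm2,
      mul_add, ← lintegral_const_mul' _ _ ENNReal.ofReal_ne_top,
      ← lintegral_const_mul' _ _ ENNReal.ofReal_ne_top]
    congr 1
    · exact lintegral_congr fun u => (ENNReal.ofReal_mul (hFpos (x, y)).le).symm
    · refine lintegral_congr fun v => ?_
      rw [← ENNReal.ofReal_mul (hFpos (x, y)).le, hFsymm x y, hFsymm x v]
      rfl
  have hTswapmeas : Measurable fun p : M × M => T p.swap := hTmeas.comp measurable_swap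
  have hfish : nlFisher (μ.prod μ) (tensorKernel (fun x => k x) (fun x => k x)) F
      = (∫⁻ p, T p ∂(μ.prod μ)) + ∫⁻ p, T p.swap ∂(μ.prod μ) := by
    rw [nlFisher, lintegral_congr hdecomp, lintegral_add_left hTmeas]
  have hswap : ∫⁻ p, T p.swap ∂(μ.prod μ) = ∫⁻ p, T p ∂(μ.prod μ) := by
    rw [← lintegral_map hTmeas measurable_swap, Measure.prod_swap]
  have hGkey : ∀ x u : M, ENNReal.ofReal ((∫ y, F (x, y) ∂μ)
        * Upsilon (Real.log (∫ y, F (u, y) ∂μ) - Real.log (∫ y, F (x, y) ∂μ)))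
      ≤ ∫⁻ y, ENNReal.ofReal
          (F (x, y) * Upsilon (Real.log (F (u, y)) - Real.log (F (x, y)))) ∂μ := fun x u =>
    key_jensen μ (hF.comp measurable_prodMk_left) (hF.comp measurable_prodMk_left)
      (fun y => hFpos _) (fun y => hFpos _)
  have hTlow : nlFisher μ (fun x => k x) (fun x => ∫ y, F (x, y) ∂μ)
      ≤ ∫⁻ p, T p ∂(μ.prod μ) := by
    rw [lintegral_prod T hTmeas.aemeasurable]
    have hswap2 : ∀ x : M, ∫⁻ y, T (x, y) ∂μ
        = ∫⁻ u, ∫⁻ y, ENNReal.ofReal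
            (F (x, y) * Upsilon (Real.log (F (u, y)) - Real.log (F (x, y)))) ∂μ ∂(k x) := by
      intro x
      refine lintegral_lintegral_swap (μ := μ) (ν := k x)
        (f := fun y u => ENNReal.ofReal
          (F (x, y) * Upsilon (Real.log (F (u, y)) - Real.log (F (x, y)))))
        (Measurable.aemeasurable ?_)
      rw [Function.uncurry_def]
      apply Measurable.ennreal_ofReal
      exact (hF.comp (measurable_const.prodMk measurable_fst)).mul
        (measurable_Upsilon.comp
          (((hF.comp (measurable_snd.prodMk measurable_fst)).log).sub
            ((hF.comp (measurable_const.prodMk measurable_fst)).log)))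
    have hfish2 : nlFisher μ (fun x => k x) (fun x => ∫ y, F (x, y) ∂μ)
        = ∫⁻ x, ∫⁻ u, ENNReal.ofReal ((∫ y, F (x, y) ∂μ)
            * Upsilon (Real.log (∫ y, F (u, y) ∂μ) - Real.log (∫ y, F (x, y) ∂μ))) ∂(k x) ∂μ := by
      rw [nlFisher]
      refine lintegral_congr fun x => ?_
      rw [PsiUpsilon_eq_lintegral, ← lintegral_const_mul' _ _ ENNReal.ofReal_ne_top]
      exact lintegral_congr fun u =>
        (ENNReal.ofReal_mul (integral_nonneg fun y => (hFpos (x, y)).le)).symm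
    rw [hfish2]
    refine lintegral_mono fun x => ?_
    rw [hswap2 x]
    exact lintegral_mono fun u => hGkey x u
  rw [ge_iff_le, hfish, hswap, two_mul]
  exact add_le_add hTlow hTlow
end

section
/- For i = 1,2, let (M_i,d_i) be a metric space and k_i a kernel on M_i. Let f : M_1 × M_2 → ℝ be measurable and fix (x,y) ∈ M_1 × M_2. If the integrals L_1(f^y)(x) = ∫_{M_1∖{x}} (f(u,y) − f(x,y)) k_1(x,du) and L_2(f_x)(y) = ∫_{M_2∖{y}} (f(x,v) − f(x,y)) k_2(y,dv) both exist (their positive and negative parts have finite integral), then ∫_{(M_1×M_2)∖{(x,y)}} (f(u,v) − f(x,y)) (k_1⊕k_2)((x,y), d(u,v)) = L_1(f^y)(x) + L_2(f_x)(y). -/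
open MeasureTheory ENNReal

theorem setIntegral_tensorKernel {M₁ M₂ E : Type*} [MeasurableSpace M₁] [MeasurableSpace M₂]
    [MeasurableSingletonClass M₁] [MeasurableSingletonClass M₂]
    [NormedAddCommGroup E] [NormedSpace ℝ E]
    (k₁ : M₁ → Measure M₁) (k₂ : M₂ → Measure M₂) (g : M₁ × M₂ → E) (s : Set (M₁ × M₂))
    (x : M₁) (y : M₂)
    (h₁ : IntegrableOn (fun u => g (u, y)) ((·, y) ⁻¹' s) (k₁ x))
    (h₂ : IntegrableOn (fun v => g (x, v)) (Prod.mk x ⁻¹' s) (k₂ y)) :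
    ∫ p in s, g p ∂(tensorKernel k₁ k₂ (x, y))
      = (∫ u in (·, y) ⁻¹' s, g (u, y) ∂(k₁ x)) + ∫ v in Prod.mk x ⁻¹' s, g (x, v) ∂(k₂ y) := by
  have e₁ : MeasurableEmbedding (·, y) := measurableEmbedding_prod_mk_right (β := M₁) y
  have e₂ : MeasurableEmbedding (Prod.mk x) := measurableEmbedding_prodMk_left (β := M₂) x
  rw [tensorKernel, Measure.restrict_add, integral_add_measure (e₁.integrableOn_map_iff.2 h₁)
    (e₂.integrableOn_map_iff.2 h₂), e₁.setIntegral_map, e₂.setIntegral_map]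

theorem tensorKernel_integral_sum_general
    {M₁ M₂ : Type*} [MetricSpace M₁] [MetricSpace M₂]
    [MeasurableSpace M₁] [MeasurableSpace M₂] [BorelSpace M₁] [BorelSpace M₂]
    (k₁ : ProbabilityTheory.Kernel M₁ M₁) (k₂ : ProbabilityTheory.Kernel M₂ M₂)
    (f : M₁ × M₂ → ℝ) (x : M₁) (y : M₂)
    (h₁ : IntegrableOn (fun u => f (u, y) - f (x, y)) {x}ᶜ (k₁ x))
    (h₂ : IntegrableOn (fun v => f (x, v) - f (x, y)) {y}ᶜ (k₂ y)) :
    ∫ p in {(x, y)}ᶜ, (f p - f (x, y))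
        ∂(tensorKernel (fun a => k₁ a) (fun b => k₂ b) (x, y))
      = (∫ u in {x}ᶜ, (f (u, y) - f (x, y)) ∂(k₁ x))
        + ∫ v in {y}ᶜ, (f (x, v) - f (x, y)) ∂(k₂ y) := by
  have hx : (·, y) ⁻¹' {(x, y)}ᶜ = ({x}ᶜ : Set M₁) := by ext; simp
  have hy : Prod.mk x ⁻¹' {(x, y)}ᶜ = ({y}ᶜ : Set M₂) := by ext; simp
  rw [setIntegral_tensorKernel _ _ _ _ x y (hx ▸ h₁) (hy ▸ h₂), hx, hy]

/-- If `L₁(f^y)(x)` and `L₂(f_x)(y)` exist (i.e. the corresponding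
integrands are integrable), then the nonlocal operator associated with the tensorized
kernel `k₁⊕k₂` evaluates as the sum
`∫_{(M₁×M₂)∖{(x,y)}} (f(u,v) − f(x,y)) (k₁⊕k₂)((x,y),d(u,v)) = L₁(f^y)(x) + L₂(f_x)(y)`. -/
theorem tensorKernel_integral_sum
    {M₁ M₂ : Type*} [MetricSpace M₁] [MetricSpace M₂]
    [MeasurableSpace M₁] [MeasurableSpace M₂] [BorelSpace M₁] [BorelSpace M₂]
    (k₁ : ProbabilityTheory.Kernel M₁ M₁) (k₂ : ProbabilityTheory.Kernel M₂ M₂)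
    (hk₁ : ∀ x, SigmaFinite (k₁ x)) (hk₂ : ∀ y, SigmaFinite (k₂ y))
    (f : M₁ × M₂ → ℝ) (hf : Measurable f) (x : M₁) (y : M₂)
    (h₁ : IntegrableOn (fun u => f (u, y) - f (x, y)) {x}ᶜ (k₁ x))
    (h₂ : IntegrableOn (fun v => f (x, v) - f (x, y)) {y}ᶜ (k₂ y)) :
    ∫ p in {(x, y)}ᶜ, (f p - f (x, y))
        ∂(tensorKernel (fun a => k₁ a) (fun b => k₂ b) (x, y))
      = (∫ u in {x}ᶜ, (f (u, y) - f (x, y)) ∂(k₁ x))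
        + ∫ v in {y}ᶜ, (f (x, v) - f (x, y)) ∂(k₂ y) :=
  tensorKernel_integral_sum_general k₁ k₂ f x y h₁ h₂
end

section
/- Let (M,d) be a metric space, k a kernel on M, and ν a σ-finite Borel measure on M. Let H : M × M → (0,∞) be such that H(x,·) is Borel measurable and the restriction of H to (M∖{x}) × M is product-measurable for every x ∈ M, and let f : M → (0,∞) be Borel measurable. Assume that Pf(x) := ∫_M H(x,y) f(y) dν(y) is finite for every x ∈ M, that Ψ_Υ^k(log(Pf))(x) exists for every x ∈ M, and that for ν-a.e. y ∈ M the quantity Ψ_Υ^k(log H(·,y))(x) exists for every x ∈ M. Then for every x ∈ M: ∫_M Ψ_Υ^k(log H(·,y))(x) · H(x,y) · f(y) dν(y) ≥ Ψ_Υ^k(log(Pf))(x) · Pf(x). -/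
open MeasureTheory ENNReal

lemma key_ineq {a b A B : ℝ} (ha : 0 < a) (hb : 0 < b) (hA : 0 < A) (hB : 0 < B) :
    a * (Real.log A - Real.log B) + b * (1 - A / B) ≤ Upsilon (Real.log b - Real.log a) * a := by
  have hba : Real.exp (Real.log b - Real.log a) = b / a := by
    rw [Real.exp_sub, Real.exp_log hb, Real.exp_log ha]
  have hexp : Real.exp (-(Real.log a - Real.log b + Real.log B - Real.log A)) = b * A / (a * B) := by
    rw [show -(Real.log a - Real.log b + Real.log B - Real.log A)
        = (Real.log b + Real.log A) - (Real.log a + Real.log B) by ring,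
      Real.exp_sub, Real.exp_add, Real.exp_add, Real.exp_log hb, Real.exp_log hA,
      Real.exp_log ha, Real.exp_log hB]
  have key : a * Real.exp (-(Real.log a - Real.log b + Real.log B - Real.log A)) = b * A / B := by
    rw [hexp]; field_simp
  have h1 : 1 - (Real.log a - Real.log b + Real.log B - Real.log A)
      ≤ Real.exp (-(Real.log a - Real.log b + Real.log B - Real.log A)) := by
    linarith [Real.add_one_le_exp (-(Real.log a - Real.log b + Real.log B - Real.log A))]
  have h2 := mul_le_mul_of_nonneg_left h1 ha.le
  simp only [Upsilon, hba]
  have e2 : b * (1 - A / B) = b - b * A / B := by ring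
  have e3 : (b / a - 1 - (Real.log b - Real.log a)) * a
      = b - a - (Real.log b - Real.log a) * a := by field_simp
  rw [e2, e3]
  nlinarith [h2, key]

lemma sigmaFinite_comap_subtype {α : Type*} [MeasurableSpace α] (μ : Measure α) [SigmaFinite μ]
    {s : Set α} (hs : MeasurableSet s) :
    SigmaFinite (μ.comap (Subtype.val : s → α)) := by
  refine ⟨⟨⟨fun n => Subtype.val ⁻¹' spanningSets μ n, fun _ => trivial, ?_, ?_⟩⟩⟩
  · intro n
    rw [(MeasurableEmbedding.subtype_coe hs).comap_apply]
    exact lt_of_le_of_lt (measure_mono (Set.image_preimage_subset _ _))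
      (measure_spanningSets_lt_top μ n)
  · rw [← Set.preimage_iUnion, iUnion_spanningSets, Set.preimage_univ]

theorem PsiUpsilon_projection_inequality'
    {M : Type*} [MetricSpace M] [MeasurableSpace M] [BorelSpace M]
    (k : ProbabilityTheory.Kernel M M) (hk : ∀ x, SigmaFinite (k x))
    (ν : Measure M) [SigmaFinite ν]
    (H : M → M → ℝ) (f : M → ℝ)
    (hHpos : ∀ x y, 0 < H x y) (hfpos : ∀ x, 0 < f x)
    (hf : Measurable f)
    (hH1 : ∀ x, Measurable fun y => H x y)
    (hH2 : ∀ x : M, Measurable fun p : ({x}ᶜ : Set M) × M => H p.1.1 p.2)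
    (hPf : ∀ x, Integrable (fun y => H x y * f y) ν) :
    ∀ x : M,
      (∫⁻ z in {x}ᶜ, ENNReal.ofReal (Upsilon (Real.log (∫ y, H z y * f y ∂ν)
            - Real.log (∫ y, H x y * f y ∂ν))) ∂(k x))
          * ENNReal.ofReal (∫ y, H x y * f y ∂ν)
        ≤ ∫⁻ y, (∫⁻ z in {x}ᶜ, ENNReal.ofReal (Upsilon (Real.log (H z y)
            - Real.log (H x y))) ∂(k x))
            * ENNReal.ofReal (H x y * f y) ∂ν := by
  intro x
  haveI := hk x
  have hsm : MeasurableSet ({x}ᶜ : Set M) := (measurableSet_singleton x).compl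
  set A : ℝ := ∫ y, H x y * f y ∂ν with hAdef
  rcases le_or_gt A 0 with hA0 | hA0
  · rw [ENNReal.ofReal_eq_zero.2 hA0, mul_zero]; exact zero_le
  have hν : ν ≠ 0 := by
    rintro rfl
    rw [hAdef, integral_zero_measure] at hA0
    exact lt_irrefl 0 hA0
  have hBpos : ∀ z : M, 0 < ∫ y, H z y * f y ∂ν := by
    intro z
    have hnn : 0 ≤ fun y => H z y * f y := fun y => (mul_pos (hHpos z y) (hfpos y)).le
    rw [integral_pos_iff_support_of_nonneg hnn (hPf z)]
    have hsup : Function.support (fun y => H z y * f y) = Set.univ := by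
      ext y
      simp only [Function.support, ne_eq, Set.mem_setOf_eq, Set.mem_univ, iff_true]
      exact (mul_pos (hHpos z y) (hfpos y)).ne'
    rw [hsup]
    exact Measure.measure_univ_pos.mpr hν
  -- Step 1: pointwise (in z) Jensen-type inequality
  have step1 : ∀ z : M,
      ENNReal.ofReal (Upsilon (Real.log (∫ y, H z y * f y ∂ν) - Real.log A))
          * ENNReal.ofReal A
        ≤ ∫⁻ y, ENNReal.ofReal (Upsilon (Real.log (H z y) - Real.log (H x y)))
            * ENNReal.ofReal (H x y * f y) ∂ν := by
    intro z
    set Bz : ℝ := ∫ y, H z y * f y ∂ν with hBzdef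
    set g : M → ℝ := fun y => (H x y * f y) * (Real.log A - Real.log Bz)
        + (H z y * f y) * (1 - A / Bz) with hgdef
    have hgint : Integrable g ν := ((hPf x).mul_const _).add ((hPf z).mul_const _)
    have hgval : ∫ y, g y ∂ν = Upsilon (Real.log Bz - Real.log A) * A := by
      rw [hgdef]
      rw [integral_add ((hPf x).mul_const _) ((hPf z).mul_const _),
        integral_mul_const, integral_mul_const, ← hAdef, ← hBzdef]
      have hBA : Real.exp (Real.log Bz - Real.log A) = Bz / A := by
        rw [Real.exp_sub, Real.exp_log (hBpos z), Real.exp_log hA0]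
      have hBz : (0:ℝ) < Bz := hBzdef ▸ hBpos z
      simp only [Upsilon, hBA]
      field_simp [hA0.ne', hBz.ne']
      ring
    have hpt : ∀ y, max (g y) 0
        ≤ Upsilon (Real.log (H z y) - Real.log (H x y)) * (H x y * f y) := by
      intro y
      have ha := mul_pos (hHpos x y) (hfpos y)
      have hb := mul_pos (hHpos z y) (hfpos y)
      have h := key_ineq ha hb hA0 (hBpos z)
      have hlog : Real.log (H z y * f y) - Real.log (H x y * f y)
          = Real.log (H z y) - Real.log (H x y) := by
        rw [Real.log_mul (hHpos z y).ne' (hfpos y).ne',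
          Real.log_mul (hHpos x y).ne' (hfpos y).ne']
        ring
      rw [hlog] at h
      exact max_le h (mul_nonneg (Upsilon_nonneg _) ha.le)
    calc ENNReal.ofReal (Upsilon (Real.log Bz - Real.log A)) * ENNReal.ofReal A
        = ENNReal.ofReal (∫ y, g y ∂ν) := by
          rw [hgval, ENNReal.ofReal_mul (Upsilon_nonneg _)]
      _ ≤ ENNReal.ofReal (∫ y, max (g y) 0 ∂ν) :=
          ENNReal.ofReal_le_ofReal
            (integral_mono hgint hgint.pos_part (fun y => le_max_left _ _))
      _ = ∫⁻ y, ENNReal.ofReal (max (g y) 0) ∂ν :=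
          ofReal_integral_eq_lintegral_ofReal hgint.pos_part
            (ae_of_all _ fun y => le_max_right _ _)
      _ ≤ ∫⁻ y, ENNReal.ofReal (Upsilon (Real.log (H z y) - Real.log (H x y))
            * (H x y * f y)) ∂ν :=
          lintegral_mono fun y => ENNReal.ofReal_le_ofReal (hpt y)
      _ = ∫⁻ y, ENNReal.ofReal (Upsilon (Real.log (H z y) - Real.log (H x y)))
            * ENNReal.ofReal (H x y * f y) ∂ν := by
          simp_rw [ENNReal.ofReal_mul (Upsilon_nonneg _)]
  -- Step 2: integrate in z and apply Tonelli
  haveI : SigmaFinite ((k x : Measure M).comap (Subtype.val : ({x}ᶜ : Set M) → M)) :=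
    sigmaFinite_comap_subtype _ hsm
  have hmeas : AEMeasurable
      (Function.uncurry fun (z : ({x}ᶜ : Set M)) (y : M) =>
        ENNReal.ofReal (Upsilon (Real.log (H z.1 y) - Real.log (H x y)))
          * ENNReal.ofReal (H x y * f y))
      (((k x : Measure M).comap (Subtype.val : ({x}ᶜ : Set M) → M)).prod ν) := by
    have m1 : Measurable fun p : ({x}ᶜ : Set M) × M => H p.1.1 p.2 := hH2 x
    have mΥ : Measurable Upsilon := (Real.measurable_exp.sub measurable_const).sub measurable_id
    have marg : Measurable fun p : ({x}ᶜ : Set M) × M =>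
        Real.log (H p.1.1 p.2) - Real.log (H x p.2) :=
      (Real.measurable_log.comp m1).sub
        ((Real.measurable_log.comp (hH1 x)).comp measurable_snd)
    exact ((ENNReal.measurable_ofReal.comp (mΥ.comp marg)).mul
      (ENNReal.measurable_ofReal.comp (((hH1 x).mul hf).comp measurable_snd))).aemeasurable
  calc (∫⁻ z in {x}ᶜ, ENNReal.ofReal (Upsilon (Real.log (∫ y, H z y * f y ∂ν)
          - Real.log A)) ∂(k x)) * ENNReal.ofReal A
      = ∫⁻ z in {x}ᶜ, ENNReal.ofReal (Upsilon (Real.log (∫ y, H z y * f y ∂ν)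
          - Real.log A)) * ENNReal.ofReal A ∂(k x) :=
        (lintegral_mul_const' _ _ ofReal_ne_top).symm
    _ ≤ ∫⁻ z in {x}ᶜ, ∫⁻ y, ENNReal.ofReal (Upsilon (Real.log (H z y) - Real.log (H x y)))
          * ENNReal.ofReal (H x y * f y) ∂ν ∂(k x) :=
        lintegral_mono fun z => step1 z
    _ = ∫⁻ z : ({x}ᶜ : Set M), ∫⁻ y, ENNReal.ofReal (Upsilon (Real.log (H z.1 y)
          - Real.log (H x y))) * ENNReal.ofReal (H x y * f y) ∂ν
          ∂((k x : Measure M).comap Subtype.val) :=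
        (lintegral_subtype_comap hsm (fun z => ∫⁻ y, ENNReal.ofReal (Upsilon (Real.log (H z y)
          - Real.log (H x y))) * ENNReal.ofReal (H x y * f y) ∂ν)).symm
    _ = ∫⁻ y, ∫⁻ z : ({x}ᶜ : Set M), ENNReal.ofReal (Upsilon (Real.log (H z.1 y)
          - Real.log (H x y))) * ENNReal.ofReal (H x y * f y)
          ∂((k x : Measure M).comap Subtype.val) ∂ν :=
        lintegral_lintegral_swap hmeas
    _ = ∫⁻ y, ∫⁻ z in {x}ᶜ, ENNReal.ofReal (Upsilon (Real.log (H z y)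
          - Real.log (H x y))) * ENNReal.ofReal (H x y * f y) ∂(k x) ∂ν :=
        lintegral_congr fun y => lintegral_subtype_comap hsm
          (fun z => ENNReal.ofReal (Upsilon (Real.log (H z y)
            - Real.log (H x y))) * ENNReal.ofReal (H x y * f y))
    _ = ∫⁻ y, (∫⁻ z in {x}ᶜ, ENNReal.ofReal (Upsilon (Real.log (H z y)
          - Real.log (H x y))) ∂(k x)) * ENNReal.ofReal (H x y * f y) ∂ν :=
        lintegral_congr fun y => lintegral_mul_const' _ _ ofReal_ne_top

/-- Weber–Zacher key lemma. For positive `H` and `f` with the stated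
measurability and with `Pf(x) = ∫ H(x,y) f(y) dν(y)` finite for every `x`, one has for
every `x`: `Ψ_Υ^k(log Pf)(x) · Pf(x) ≤ ∫ Ψ_Υ^k(log H(·,y))(x) · H(x,y) · f(y) dν(y)`. -/
theorem PsiUpsilon_projection_inequality
    {M : Type*} [MetricSpace M] [MeasurableSpace M] [BorelSpace M]
    (k : ProbabilityTheory.Kernel M M) (hk : ∀ x, SigmaFinite (k x))
    (ν : Measure M) [SigmaFinite ν]
    (H : M → M → ℝ) (f : M → ℝ)
    (hHpos : ∀ x y, 0 < H x y) (hfpos : ∀ x, 0 < f x)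
    (hf : Measurable f)
    (hH1 : ∀ x, Measurable fun y => H x y)
    (hH2 : ∀ x : M, Measurable fun p : ({x}ᶜ : Set M) × M => H p.1.1 p.2)
    (hPf : ∀ x, Integrable (fun y => H x y * f y) ν) :
    ∀ x : M,
      PsiUpsilon (fun a => k a) (fun x' => Real.log (∫ y, H x' y * f y ∂ν)) x
          * ENNReal.ofReal (∫ y, H x y * f y ∂ν)
        ≤ ∫⁻ y, PsiUpsilon (fun a => k a) (fun x' => Real.log (H x' y)) x
            * ENNReal.ofReal (H x y * f y) ∂ν := by
  intro x
  have h := PsiUpsilon_projection_inequality' k hk ν H f hHpos hfpos hf hH1 hH2 hPf x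
  simpa [PsiUpsilon] using h
end

section
/- Let (M,d) be a metric space and k a kernel on M. Then for every strictly positive measurable function f : M → (0,∞) and all (x,y) ∈ M × M, one has the identity in [0,∞]: Ψ_Υ^{k⊕k}(log(f⊗f))(x,y) = Ψ_Υ^k(log f)(x) + Ψ_Υ^k(log f)(y), where (f⊗f)(u,v) = f(u)f(v). -/
open MeasureTheory ENNReal

/-!
Since `Ψ_Υ^k(g)(x)` only sees the increments `g y - g x`, it is unchanged by adding a constant
to `g`. The tensorized kernel at `(x, y)` is carried by the two fibres `M × {y}` and `{x} × M`,
and on the first fibre the increment of `log (f ⊗ f)` is `log f u - log f x`, on the second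
`log f v - log f y`.
-/

section PsiUpsilon

variable {M : Type*} [MeasurableSpace M]

theorem PsiUpsilon_add_const (k : M → Measure M) (g : M → ℝ) (c : ℝ) (x : M) :
    PsiUpsilon k (fun y => g y + c) x = PsiUpsilon k g x := by
  simp only [PsiUpsilon, add_sub_add_right_eq_sub]

theorem PsiUpsilon_const_add (k : M → Measure M) (g : M → ℝ) (c : ℝ) (x : M) :
    PsiUpsilon k (fun y => c + g y) x = PsiUpsilon k g x := by
  simp only [add_comm c, PsiUpsilon_add_const]

end PsiUpsilon

theorem PsiUpsilon_tensorKernel {M₁ M₂ : Type*} [MeasurableSpace M₁] [MeasurableSpace M₂]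
    [MeasurableSingletonClass M₁] [MeasurableSingletonClass M₂]
    (k₁ : M₁ → Measure M₁) (k₂ : M₂ → Measure M₂) (g : M₁ × M₂ → ℝ) (x : M₁) (y : M₂) :
    PsiUpsilon (tensorKernel k₁ k₂) g (x, y)
      = PsiUpsilon k₁ (fun u => g (u, y)) x + PsiUpsilon k₂ (fun v => g (x, v)) y := by
  have hfst : MeasurableEmbedding fun u : M₁ => (u, y) := measurableEmbedding_prod_mk_right y
  have hsnd : MeasurableEmbedding fun v : M₂ => (x, v) := measurableEmbedding_prodMk_left x
  have hfst_preimage : (fun u : M₁ => (u, y)) ⁻¹' {(x, y)}ᶜ = {x}ᶜ := by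
    ext u; simp
  have hsnd_preimage : (fun v : M₂ => (x, v)) ⁻¹' {(x, y)}ᶜ = {y}ᶜ := by
    ext v; simp
  rw [PsiUpsilon, tensorKernel, Measure.restrict_add, lintegral_add_measure,
    hfst.restrict_map, hsnd.restrict_map, hfst.lintegral_map, hsnd.lintegral_map,
    hfst_preimage, hsnd_preimage]
  rfl

theorem PsiUpsilon_tensor_log_general
    {M : Type*} [MetricSpace M] [MeasurableSpace M] [BorelSpace M]
    (k : ProbabilityTheory.Kernel M M)
    (f : M → ℝ) (hfpos : ∀ x, 0 < f x) (x y : M) :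
    PsiUpsilon (tensorKernel (fun a => k a) (fun a => k a))
        (fun p => Real.log (f p.1 * f p.2)) (x, y)
      = PsiUpsilon (fun a => k a) (fun u => Real.log (f u)) x
        + PsiUpsilon (fun a => k a) (fun v => Real.log (f v)) y := by
  have log_mul_f (u v : M) : Real.log (f u * f v) = Real.log (f u) + Real.log (f v) :=
    Real.log_mul (hfpos u).ne' (hfpos v).ne'
  rw [PsiUpsilon_tensorKernel]
  simp only [log_mul_f, PsiUpsilon_add_const, PsiUpsilon_const_add]

/-- For strictly positive measurable `f` one has, in `[0,∞]`,
`Ψ_Υ^{k⊕k}(log(f⊗f))(x,y) = Ψ_Υ^k(log f)(x) + Ψ_Υ^k(log f)(y)`. -/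
theorem PsiUpsilon_tensor_log
    {M : Type*} [MetricSpace M] [MeasurableSpace M] [BorelSpace M]
    (k : ProbabilityTheory.Kernel M M) (hk : ∀ x, SigmaFinite (k x))
    (f : M → ℝ) (hf : Measurable f) (hfpos : ∀ x, 0 < f x) (x y : M) :
    PsiUpsilon (tensorKernel (fun a => k a) (fun a => k a))
        (fun p => Real.log (f p.1 * f p.2)) (x, y)
      = PsiUpsilon (fun a => k a) (fun u => Real.log (f u)) x
        + PsiUpsilon (fun a => k a) (fun v => Real.log (f v)) y :=
  PsiUpsilon_tensor_log_general k f hfpos x y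
end

section
/- Let α > 0 and let μ_α be the probability measure on (0,∞) with density Γ(α)^{-1} x^{α−1} e^{−x} with respect to Lebesgue measure, where Γ(α) denotes the Gamma function at α. Let F : (0,∞)² → (0,∞) be a symmetric (F(x,y) = F(y,x)) probability density with respect to μ_α ⊗ μ_α, continuously differentiable, such that all the integrals below are finite and differentiation under the integral sign ∂_x Π F(x) = ∫ ∂_x F(x,y) dμ_α(y) is valid, where Π F(x) = ∫_{(0,∞)} F(x,y) dμ_α(y). Then ∫_{(0,∞)}∫_{(0,∞)} [ x·(∂_x F(x,y))²/F(x,y) + y·(∂_y F(x,y))²/F(x,y) ] dμ_α(x) dμ_α(y) ≥ 2·∫_{(0,∞)} x·((Π F)'(x))²/Π F(x) dμ_α(x). -/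
open MeasureTheory

/-- Auxiliary: the "x-direction" Fisher integrand. -/
noncomputable def laguerreGaux (F : ℝ → ℝ → ℝ) : ℝ × ℝ → ℝ :=
  fun p => p.1 * (deriv (fun x' => F x' p.2) p.1) ^ 2 / F p.1 p.2

/-- Auxiliary: the "y-direction" Fisher integrand. -/
noncomputable def laguerreHaux (F : ℝ → ℝ → ℝ) : ℝ × ℝ → ℝ :=
  fun p => p.2 * (deriv (fun y' => F p.1 y') p.2) ^ 2 / F p.1 p.2

/-- Lifting inequality for the Fisher information associated with the
Laguerre operator `L_α f = x f'' + (x−α) f'`, whose carré du champ is `x (f')²` and whose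
invariant probability measure is `dμ_α = Γ(α)⁻¹ x^{α−1} e^{−x} dx` on `(0,∞)`. -/
theorem laguerre_fisher_lifting
    (α : ℝ) (hα : 0 < α)
    (μ : Measure ℝ)
    (hμ : μ = (volume.restrict (Set.Ioi (0 : ℝ))).withDensity
        fun x => ENNReal.ofReal (x ^ (α - 1) * Real.exp (-x) / Real.Gamma α))
    (F : ℝ → ℝ → ℝ)
    (hFpos : ∀ x ∈ Set.Ioi (0 : ℝ), ∀ y ∈ Set.Ioi (0 : ℝ), 0 < F x y)
    (hFsymm : ∀ x y, F x y = F y x)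
    (hFC1 : ContDiffOn ℝ 1 (fun p : ℝ × ℝ => F p.1 p.2) (Set.Ioi 0 ×ˢ Set.Ioi 0))
    (hFint : Integrable (fun p : ℝ × ℝ => F p.1 p.2) (μ.prod μ))
    (hFdens : ∫ p, F p.1 p.2 ∂(μ.prod μ) = 1)
    (PF : ℝ → ℝ) (hPF : ∀ x, PF x = ∫ y, F x y ∂μ)
    (hswap : ∀ x ∈ Set.Ioi (0 : ℝ), deriv PF x = ∫ y, deriv (fun x' => F x' y) x ∂μ)
    (hI1 : Integrable (fun p : ℝ × ℝ =>
        p.1 * (deriv (fun x' => F x' p.2) p.1) ^ 2 / F p.1 p.2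
          + p.2 * (deriv (fun y' => F p.1 y') p.2) ^ 2 / F p.1 p.2) (μ.prod μ))
    (hI2 : Integrable (fun x => x * (deriv PF x) ^ 2 / PF x) μ) :
    ∫ p, (p.1 * (deriv (fun x' => F x' p.2) p.1) ^ 2 / F p.1 p.2
        + p.2 * (deriv (fun y' => F p.1 y') p.2) ^ 2 / F p.1 p.2) ∂(μ.prod μ)
      ≥ 2 * ∫ x, x * (deriv PF x) ^ 2 / PF x ∂μ := by
  haveI hSF : SFinite μ := by rw [hμ]; infer_instance
  set G : ℝ × ℝ → ℝ := laguerreGaux F with hGdef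
  set H : ℝ × ℝ → ℝ := laguerreHaux F with hHdef
  -- the measure lives on (0,∞)
  have hμc : μ (Set.Ioi (0:ℝ))ᶜ = 0 := by
    rw [hμ, withDensity_apply _ measurableSet_Ioi.compl]
    apply setLIntegral_measure_zero
    rw [Measure.restrict_apply measurableSet_Ioi.compl, Set.compl_inter_self,
      measure_empty]
  have hx0 : ∀ᵐ x ∂μ, 0 < x := by
    have hset : {x : ℝ | ¬ 0 < x} = (Set.Ioi (0:ℝ))ᶜ := by ext x; simp
    rw [ae_iff, hset]; exact hμc
  have hS : ∀ᵐ p ∂(μ.prod μ), 0 < p.1 ∧ 0 < p.2 := by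
    have hset : {p : ℝ × ℝ | ¬ (0 < p.1 ∧ 0 < p.2)} = (Set.Ioi (0:ℝ) ×ˢ Set.Ioi (0:ℝ))ᶜ := by
      ext p; simp [Set.mem_prod]
    rw [ae_iff, hset]
    exact Measure.measure_prod_compl_eq_zero (μ := μ) (ν := μ)
      (s := Set.Ioi (0:ℝ)) (t := Set.Ioi (0:ℝ)) hμc hμc
  set S : Set (ℝ × ℝ) := Set.Ioi (0:ℝ) ×ˢ Set.Ioi (0:ℝ) with hSdef
  have hSopen : IsOpen S := isOpen_Ioi.prod isOpen_Ioi
  -- the continuous version of the partial derivative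
  set g : ℝ × ℝ → ℝ := fun p => fderiv ℝ (fun q : ℝ × ℝ => F q.1 q.2) p ((1:ℝ), (0:ℝ))
    with hgdef
  have hderiv : ∀ p ∈ S, HasDerivAt (fun x' => F x' p.2) (g p) p.1 := by
    intro p hp
    have hd : DifferentiableAt ℝ (fun q : ℝ × ℝ => F q.1 q.2) p :=
      (hFC1.contDiffAt (hSopen.mem_nhds hp)).differentiableAt one_ne_zero
    have h1 : HasDerivAt (fun x' : ℝ => (x', p.2)) ((1:ℝ), (0:ℝ)) p.1 :=
      HasDerivAt.prodMk (hasDerivAt_id p.1) (hasDerivAt_const p.1 p.2)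
    exact hd.hasFDerivAt.comp_hasDerivAt p.1 h1
  have hg_cont : ContinuousOn g S := by
    have hc := hFC1.continuousOn_fderiv_of_isOpen hSopen le_rfl
    exact (ContinuousLinearMap.apply ℝ ℝ ((1:ℝ),(0:ℝ))).continuous.comp_continuousOn hc
  have hGg : ∀ p ∈ S, G p = p.1 * (g p) ^ 2 / F p.1 p.2 := by
    intro p hp
    simp only [hGdef, laguerreGaux, (hderiv p hp).deriv]
  -- measurability of G
  have hres : (μ.prod μ).restrict S = μ.prod μ := by
    apply Measure.restrict_eq_self_of_ae_mem
    exact hS.mono fun p hp => ⟨hp.1, hp.2⟩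
  have hGc_meas : AEStronglyMeasurable (fun p : ℝ × ℝ => p.1 * (g p) ^ 2 / F p.1 p.2)
      (μ.prod μ) := by
    rw [← hres]
    apply ContinuousOn.aestronglyMeasurable _ hSopen.measurableSet
    exact (continuousOn_fst.mul (hg_cont.pow 2)).div hFC1.continuousOn
      (fun p hp => (hFpos p.1 hp.1 p.2 hp.2).ne')
  have hG_meas : AEStronglyMeasurable G (μ.prod μ) :=
    hGc_meas.congr (hS.mono fun p hp => (hGg p ⟨hp.1, hp.2⟩).symm)
  -- nonnegativity
  have hGnn : ∀ p ∈ S, 0 ≤ G p := fun p hp =>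
    div_nonneg (mul_nonneg (le_of_lt hp.1) (sq_nonneg _)) (hFpos p.1 hp.1 p.2 hp.2).le
  have hHnn : ∀ p ∈ S, 0 ≤ H p := fun p hp =>
    div_nonneg (mul_nonneg (le_of_lt hp.2) (sq_nonneg _)) (hFpos p.1 hp.1 p.2 hp.2).le
  have hI1' : Integrable (fun p => G p + H p) (μ.prod μ) := hI1
  -- integrability of G
  have hGint : Integrable G (μ.prod μ) := by
    refine hI1'.mono hG_meas (hS.mono fun p hp => ?_)
    have h1 := hGnn p ⟨hp.1, hp.2⟩
    have h2 := hHnn p ⟨hp.1, hp.2⟩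
    rw [Real.norm_eq_abs, Real.norm_eq_abs, abs_of_nonneg h1, abs_of_nonneg (by linarith)]
    linarith
  -- H is G composed with swap
  have hHG : ∀ p : ℝ × ℝ, H p = G p.swap := by
    intro p
    have h1 : (fun y' => F p.1 y') = fun y' => F y' p.1 := funext fun y' => hFsymm _ _
    simp only [hHdef, hGdef, laguerreHaux, laguerreGaux, Prod.fst_swap, Prod.snd_swap, h1,
      hFsymm p.1 p.2]
  have hHint : Integrable H (μ.prod μ) := by
    have : Integrable (G ∘ Prod.swap) (μ.prod μ) := hGint.swap
    exact this.congr (Filter.Eventually.of_forall fun p => (hHG p).symm)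
  have hIHG : ∫ p, H p ∂(μ.prod μ) = ∫ p, G p ∂(μ.prod μ) := by
    calc ∫ p, H p ∂(μ.prod μ) = ∫ p, G p.swap ∂(μ.prod μ) := by simp only [hHG]
    _ = ∫ p, G p ∂(μ.prod μ) := integral_prod_swap G
  -- the total integral is twice the G-integral
  have htot : ∫ p, (G p + H p) ∂(μ.prod μ) = 2 * ∫ p, G p ∂(μ.prod μ) := by
    rw [integral_add hGint hHint, hIHG]; ring
  -- the key pointwise (in x) inequality
  have key : ∀ᵐ x ∂μ, x * (deriv PF x) ^ 2 / PF x ≤ ∫ y, G (x, y) ∂μ := by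
    filter_upwards [hx0, hFint.prod_right_ae, hGint.prod_right_ae] with x hx hFx hGx
    have hxne : x ≠ 0 := hx.ne'
    set d : ℝ → ℝ := fun y => deriv (fun x' => F x' y) x with hddef
    have hGxy : ∀ y, G (x, y) = x * (d y) ^ 2 / F x y := fun y => rfl
    have hqy : ∀ y, x⁻¹ * G (x, y) = (d y) ^ 2 / F x y := by
      intro y
      rw [hGxy, ← mul_div_assoc, inv_mul_cancel_left₀ hxne]
    -- integrability of d
    have hdmeas : AEStronglyMeasurable d μ := by
      have hcont : ContinuousOn (fun y => g (x, y)) (Set.Ioi 0) := by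
        apply hg_cont.comp (Continuous.continuousOn (by fun_prop))
        intro y hy; exact ⟨hx, hy⟩
      have hrx : μ.restrict (Set.Ioi (0:ℝ)) = μ :=
        Measure.restrict_eq_self_of_ae_mem (hx0.mono fun y hy => hy)
      have h1 : AEStronglyMeasurable (fun y => g (x, y)) μ := by
        rw [← hrx]; exact hcont.aestronglyMeasurable measurableSet_Ioi
      exact h1.congr (hx0.mono fun y hy => ((hderiv (x, y) ⟨hx, hy⟩).deriv).symm)
    have hqint : Integrable (fun y => x⁻¹ * G (x, y)) μ := hGx.const_mul _
    have hdint : Integrable d μ := by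
      refine Integrable.mono ((hqint.add hFx).div_const 2) hdmeas ?_
      filter_upwards [hx0] with y hy
      have hF : 0 < F x y := hFpos x hx y hy
      have hkey : (d y) ^ 2 = ((d y) ^ 2 / F x y) * F x y := (div_mul_cancel₀ _ hF.ne').symm
      have hQnn : 0 ≤ (d y) ^ 2 / F x y := div_nonneg (sq_nonneg _) hF.le
      show ‖d y‖ ≤ ‖(x⁻¹ * G (x, y) + F x y) / 2‖
      rw [Real.norm_eq_abs, Real.norm_eq_abs, hqy]
      have habs : |d y| ≤ ((d y) ^ 2 / F x y + F x y) / 2 := by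
        nlinarith [sq_nonneg (|d y| - F x y), sq_abs (d y), abs_nonneg (d y)]
      calc |d y| ≤ ((d y) ^ 2 / F x y + F x y) / 2 := habs
      _ ≤ |((d y) ^ 2 / F x y + F x y) / 2| := le_abs_self _
    -- the integrals
    have ha : deriv PF x = ∫ y, d y ∂μ := hswap x hx
    have hb : PF x = ∫ y, F x y ∂μ := hPF x
    set a : ℝ := ∫ y, d y ∂μ
    set b : ℝ := ∫ y, F x y ∂μ
    have hGnnx : 0 ≤ ∫ y, G (x, y) ∂μ := by
      apply integral_nonneg_of_ae
      filter_upwards [hx0] with y hy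
      exact hGnn (x, y) ⟨hx, hy⟩
    rw [ha, hb]
    have hbnn : 0 ≤ b := by
      apply integral_nonneg_of_ae
      filter_upwards [hx0] with y hy
      exact (hFpos x hx y hy).le
    rcases eq_or_lt_of_le hbnn with hb0 | hbpos
    · rw [← hb0]; simpa using hGnnx
    · set t : ℝ := a / b with htdef
      have hptwise : ∀ᵐ y ∂μ, 2 * t * d y - t ^ 2 * F x y ≤ x⁻¹ * G (x, y) := by
        filter_upwards [hx0] with y hy
        have hF : 0 < F x y := hFpos x hx y hy
        have hkey : (d y) ^ 2 = ((d y) ^ 2 / F x y) * F x y := (div_mul_cancel₀ _ hF.ne').symm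
        rw [hqy]
        nlinarith [sq_nonneg (d y - t * F x y)]
      have hmono := integral_mono_ae
        ((hdint.const_mul (2 * t)).sub (hFx.const_mul (t ^ 2))) hqint hptwise
      simp only [Pi.sub_apply] at hmono
      rw [integral_sub (hdint.const_mul (2 * t)) (hFx.const_mul (t ^ 2)),
        integral_const_mul, integral_const_mul, integral_const_mul] at hmono
      replace hmono : 2 * t * a - t ^ 2 * b ≤ x⁻¹ * ∫ y, G (x, y) ∂μ := hmono
      have hbne : b ≠ 0 := ne_of_gt hbpos
      have h1 : 2 * t * a - t ^ 2 * b = a ^ 2 / b := by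
        rw [htdef]; field_simp; ring
      rw [h1] at hmono
      -- multiply by x
      have h2 : x * (a ^ 2 / b) ≤ x * (x⁻¹ * ∫ y, G (x, y) ∂μ) :=
        mul_le_mul_of_nonneg_left hmono hx.le
      rw [← mul_assoc, mul_inv_cancel₀ hxne, one_mul] at h2
      rw [mul_div_assoc]
      exact h2
  -- conclude
  have hfin : ∫ x, x * (deriv PF x) ^ 2 / PF x ∂μ ≤ ∫ p, G p ∂(μ.prod μ) := by
    rw [integral_prod G hGint]
    exact integral_mono_ae hI2 hGint.integral_prod_left key
  have hgoal : ∫ p, (G p + H p) ∂(μ.prod μ) ≥ 2 * ∫ x, x * (deriv PF x) ^ 2 / PF x ∂μ := by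
    rw [htot]; linarith
  exact hgoal
end

section
/- Let α, β > 0 and let μ_{α,β} be the probability measure on (−1,1) with density C_{α,β}·(1−x)^{α−1}(1+x)^{β−1} with respect to Lebesgue measure, where C_{α,β} is the normalizing constant. Let F : (−1,1)² → (0,∞) be a symmetric (F(x,y) = F(y,x)) probability density with respect to μ_{α,β} ⊗ μ_{α,β}, continuously differentiable, such that all the integrals below are finite and differentiation under the integral sign ∂_x Π F(x) = ∫ ∂_x F(x,y) dμ_{α,β}(y) is valid, where Π F(x) = ∫_{(−1,1)} F(x,y) dμ_{α,β}(y). Then ∫∫ [ (1−x²)·(∂_x F(x,y))²/F(x,y) + (1−y²)·(∂_y F(x,y))²/F(x,y) ] dμ_{α,β}(x) dμ_{α,β}(y) ≥ 2·∫ (1−x²)·((Π F)'(x))²/Π F(x) dμ_{α,β}(x). -/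
open MeasureTheory

/-- Cauchy–Schwarz for integrals with a positive weight:
`(∫ d)² ≤ (∫ d²/f) · (∫ f)`. -/
private lemma cs_aux {μ : Measure ℝ} {d f : ℝ → ℝ}
    (hf : ∀ᵐ y ∂μ, 0 < f y)
    (hd : Integrable d μ) (hq : Integrable (fun y => d y ^ 2 / f y) μ)
    (hfi : Integrable f μ) (hP : 0 < ∫ y, f y ∂μ) :
    (∫ y, d y ∂μ) ^ 2 ≤ (∫ y, d y ^ 2 / f y ∂μ) * ∫ y, f y ∂μ := by
  set P := ∫ y, f y ∂μ with hPdef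
  set Sv := ∫ y, d y ∂μ with hSdef
  set I := ∫ y, d y ^ 2 / f y ∂μ with hIdef
  set t : ℝ := Sv / P with htdef
  have hP0 : P ≠ 0 := ne_of_gt hP
  have h0 : 0 ≤ ∫ y, (d y - t * f y) ^ 2 / f y ∂μ :=
    integral_nonneg_of_ae (hf.mono fun y hy => div_nonneg (sq_nonneg _) hy.le)
  have hcong : ∫ y, (d y - t * f y) ^ 2 / f y ∂μ
      = ∫ y, (d y ^ 2 / f y - (2 * t) * d y + t ^ 2 * f y) ∂μ := by
    refine integral_congr_ae (hf.mono fun y hy => ?_)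
    field_simp
    ring
  rw [hcong, integral_add (f := fun y => d y ^ 2 / f y - 2 * t * d y)
      (g := fun y => t ^ 2 * f y) (hq.sub (hd.const_mul (2 * t))) (hfi.const_mul (t ^ 2)),
    integral_sub hq (hd.const_mul (2 * t)), integral_const_mul, integral_const_mul] at h0
  have hexp : I - 2 * t * Sv + t ^ 2 * P = I - Sv ^ 2 / P := by
    rw [htdef]; field_simp; ring
  rw [← hSdef, ← hIdef, ← hPdef, hexp] at h0
  have h1 : Sv ^ 2 / P ≤ I := by linarith
  exact (div_le_iff₀ hP).mp h1

/-- Lifting inequality for the Fisher information associated with the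
Jacobi operator `L_{α,β} f = (1−x²) f'' − [(α+β)x + α − β] f'`, whose carré du champ is
`(1−x²)(f')²` and whose invariant probability measure is
`dμ_{α,β} = C_{α,β}(1−x)^{α−1}(1+x)^{β−1} dx` on `(−1,1)`. -/
theorem jacobi_fisher_lifting
    (α β : ℝ) (hα : 0 < α) (hβ : 0 < β)
    (C : ℝ) (hC : 0 < C)
    (μ : Measure ℝ)
    (hμ : μ = (volume.restrict (Set.Ioo (-1 : ℝ) 1)).withDensity
        fun x => ENNReal.ofReal (C * (1 - x) ^ (α - 1) * (1 + x) ^ (β - 1)))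
    (hprob : IsProbabilityMeasure μ)
    (F : ℝ → ℝ → ℝ)
    (hFpos : ∀ x ∈ Set.Ioo (-1 : ℝ) 1, ∀ y ∈ Set.Ioo (-1 : ℝ) 1, 0 < F x y)
    (hFsymm : ∀ x y, F x y = F y x)
    (hFC1 : ContDiffOn ℝ 1 (fun p : ℝ × ℝ => F p.1 p.2)
        (Set.Ioo (-1 : ℝ) 1 ×ˢ Set.Ioo (-1 : ℝ) 1))
    (hFint : Integrable (fun p : ℝ × ℝ => F p.1 p.2) (μ.prod μ))
    (hFdens : ∫ p, F p.1 p.2 ∂(μ.prod μ) = 1)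
    (PF : ℝ → ℝ) (hPF : ∀ x, PF x = ∫ y, F x y ∂μ)
    (hswap : ∀ x ∈ Set.Ioo (-1 : ℝ) 1,
        deriv PF x = ∫ y, deriv (fun x' => F x' y) x ∂μ)
    (hI1 : Integrable (fun p : ℝ × ℝ =>
        (1 - p.1 ^ 2) * (deriv (fun x' => F x' p.2) p.1) ^ 2 / F p.1 p.2
          + (1 - p.2 ^ 2) * (deriv (fun y' => F p.1 y') p.2) ^ 2 / F p.1 p.2) (μ.prod μ))
    (hI2 : Integrable (fun x => (1 - x ^ 2) * (deriv PF x) ^ 2 / PF x) μ) :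
    ∫ p, ((1 - p.1 ^ 2) * (deriv (fun x' => F x' p.2) p.1) ^ 2 / F p.1 p.2
        + (1 - p.2 ^ 2) * (deriv (fun y' => F p.1 y') p.2) ^ 2 / F p.1 p.2) ∂(μ.prod μ)
      ≥ 2 * ∫ x, (1 - x ^ 2) * (deriv PF x) ^ 2 / PF x ∂μ := by
  classical
  set Io : Set ℝ := Set.Ioo (-1 : ℝ) 1 with hIo
  set S : Set (ℝ × ℝ) := Io ×ˢ Io with hSdef
  have hSopen : IsOpen S := isOpen_Ioo.prod isOpen_Ioo
  -- the measure lives on (-1,1)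
  have hμc : μ Ioᶜ = 0 := by
    rw [hμ, withDensity_apply _ measurableSet_Ioo.compl,
      Measure.restrict_restrict measurableSet_Ioo.compl, Set.compl_inter_self,
      Measure.restrict_empty, lintegral_zero_measure]
  have hμae : ∀ᵐ x ∂μ, x ∈ Io := by
    rw [ae_iff]; exact hμc
  have hmemS : ∀ᵐ p ∂(μ.prod μ), p ∈ S := by
    rw [ae_iff]
    refine measure_mono_null (t := (Ioᶜ ×ˢ (Set.univ : Set ℝ)) ∪ ((Set.univ : Set ℝ) ×ˢ Ioᶜ))
      ?_ ?_
    · intro p hp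
      simp only [hSdef, Set.mem_setOf_eq, Set.mem_prod, not_and_or] at hp
      rcases hp with h | h
      · exact Or.inl ⟨h, trivial⟩
      · exact Or.inr ⟨trivial, h⟩
    · refine measure_union_null ?_ ?_ <;> rw [Measure.prod_prod] <;> simp [hμc]
  -- the partial derivative in the first variable
  set A : ℝ × ℝ → ℝ :=
    fun p => (1 - p.1 ^ 2) * (deriv (fun x' => F x' p.2) p.1) ^ 2 / F p.1 p.2 with hAdef
  have hBA : ∀ p : ℝ × ℝ,
      (1 - p.2 ^ 2) * (deriv (fun y' => F p.1 y') p.2) ^ 2 / F p.1 p.2 = A p.swap := by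
    intro p
    have h1 : (fun y' => F p.1 y') = fun x' => F x' p.1 := funext fun y' => hFsymm _ _
    simp only [hAdef, Prod.fst_swap, Prod.snd_swap, h1, hFsymm p.1 p.2]
  have hfun : (fun p : ℝ × ℝ =>
      (1 - p.1 ^ 2) * (deriv (fun x' => F x' p.2) p.1) ^ 2 / F p.1 p.2
        + (1 - p.2 ^ 2) * (deriv (fun y' => F p.1 y') p.2) ^ 2 / F p.1 p.2)
      = fun p => A p + A p.swap := funext fun p => by rw [hBA p]
  -- continuity of the partial derivative on S
  have hDcont : ContinuousOn (fun p => fderiv ℝ (fun q : ℝ × ℝ => F q.1 q.2) p (1, 0)) S :=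
    (hFC1.continuousOn_fderiv_of_isOpen hSopen le_rfl).clm_apply continuousOn_const
  have hderiv_eq : ∀ p ∈ S,
      deriv (fun x' => F x' p.2) p.1 = fderiv ℝ (fun q : ℝ × ℝ => F q.1 q.2) p (1, 0) := by
    intro p hp
    have hdiff : DifferentiableAt ℝ (fun q : ℝ × ℝ => F q.1 q.2) p :=
      (hFC1.differentiableOn one_ne_zero).differentiableAt (hSopen.mem_nhds hp)
    have h1 : HasDerivAt (fun x' : ℝ => (x', p.2)) ((1 : ℝ), (0 : ℝ)) p.1 :=
      (hasDerivAt_id p.1).prodMk (hasDerivAt_const p.1 p.2)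
    have h2 := hdiff.hasFDerivAt.comp_hasDerivAt p.1 h1
    exact h2.deriv
  -- measurability of A
  have hFposS : ∀ p ∈ S, 0 < F p.1 p.2 := fun p hp => hFpos _ hp.1 _ hp.2
  have hAcont : ContinuousOn A S := by
    refine ContinuousOn.div (ContinuousOn.mul ?_ ?_) hFC1.continuousOn
      fun p hp => (hFposS p hp).ne'
    · exact (continuous_const.sub ((continuous_fst.pow 2))).continuousOn
    · exact (hDcont.pow 2).congr fun p hp => by rw [hderiv_eq p hp]; rfl
  have hAmeas : AEStronglyMeasurable A (μ.prod μ) := by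
    have h := hAcont.aestronglyMeasurable hSopen.measurableSet (μ := μ.prod μ)
    rwa [Measure.restrict_eq_self_of_ae_mem hmemS] at h
  -- nonnegativity of A a.e.
  have hsq : ∀ x ∈ Io, (0:ℝ) ≤ 1 - x ^ 2 := by
    intro x hx; nlinarith [hx.1, hx.2]
  have hAnn : ∀ p ∈ S, 0 ≤ A p := by
    intro p hp
    exact div_nonneg (mul_nonneg (hsq _ hp.1) (sq_nonneg _)) (hFposS p hp).le
  have hSswap : ∀ p : ℝ × ℝ, p ∈ S → p.swap ∈ S := fun p hp => ⟨hp.2, hp.1⟩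
  -- integrability of A
  have hI1' : Integrable (fun p => A p + A p.swap) (μ.prod μ) := by rwa [hfun] at hI1
  have hIntA : Integrable A (μ.prod μ) := by
    refine hI1'.mono' hAmeas ?_
    filter_upwards [hmemS] with p hp
    rw [Real.norm_eq_abs, abs_of_nonneg (hAnn p hp)]
    have := hAnn _ (hSswap p hp)
    linarith
  have hIntAswap : Integrable (fun p => A p.swap) (μ.prod μ) := hIntA.swap
  -- the pointwise Cauchy–Schwarz step
  have hptwise : ∀ᵐ x ∂μ,
      (1 - x ^ 2) * (deriv PF x) ^ 2 / PF x ≤ ∫ y, A (x, y) ∂μ := by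
    filter_upwards [hμae, hIntA.prod_right_ae, hFint.prod_right_ae] with x hx hAx hFx
    have hc : (0:ℝ) < 1 - x ^ 2 := by nlinarith [hx.1, hx.2]
    have hFposx : ∀ᵐ y ∂μ, 0 < F x y := hμae.mono fun y hy => hFpos x hx y hy
    set d : ℝ → ℝ := fun y => deriv (fun x' => F x' y) x with hd
    have hAxy : ∀ y, A (x, y) = (1 - x ^ 2) * (d y ^ 2 / F x y) := fun y => by
      rw [hAdef]; dsimp only; rw [mul_div_assoc]
    have hRHS : ∫ y, A (x, y) ∂μ = (1 - x ^ 2) * ∫ y, d y ^ 2 / F x y ∂μ := by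
      simp_rw [hAxy]; exact integral_const_mul _ _
    have hq : Integrable (fun y => d y ^ 2 / F x y) μ := by
      have h1 : Integrable (fun y => (1 - x ^ 2) * (d y ^ 2 / F x y)) μ := by
        simpa [hAxy] using hAx
      have h2 := h1.const_mul (1 - x ^ 2)⁻¹
      simpa [← mul_assoc, inv_mul_cancel₀ hc.ne'] using h2
    have hdm : AEStronglyMeasurable d μ := by
      have hco : ContinuousOn d Io := by
        have h1 : ContinuousOn
            (fun y => fderiv ℝ (fun q : ℝ × ℝ => F q.1 q.2) (x, y) (1, 0)) Io := by
          refine hDcont.comp ?_ fun y hy => ⟨hx, hy⟩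
          exact (continuous_const.prodMk continuous_id).continuousOn
        exact h1.congr fun y hy => hderiv_eq (x, y) ⟨hx, hy⟩
      have h := hco.aestronglyMeasurable measurableSet_Ioo (μ := μ)
      rwa [Measure.restrict_eq_self_of_ae_mem hμae] at h
    have hdi : Integrable d μ := by
      refine Integrable.mono' ((hq.add hFx).const_mul (1 / 2)) hdm ?_
      filter_upwards [hFposx] with y hy
      have key : 2 * |d y| * F x y ≤ d y ^ 2 + (F x y) ^ 2 := by
        nlinarith [sq_nonneg (|d y| - F x y), sq_abs (d y)]
      simp only [Pi.add_apply]
      rw [Real.norm_eq_abs]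
      have h2 : (1:ℝ) / 2 * (d y ^ 2 / F x y + F x y)
          = (1 / 2 * (d y ^ 2 + (F x y) ^ 2)) / F x y := by field_simp
      have h3 : |d y| = (|d y| * F x y) / F x y := by field_simp
      rw [h2, h3]
      exact (div_le_div_iff_of_pos_right hy).mpr (by linarith)
    have hI0 : 0 ≤ ∫ y, d y ^ 2 / F x y ∂μ :=
      integral_nonneg_of_ae (hFposx.mono fun y hy => div_nonneg (sq_nonneg _) hy.le)
    rw [hRHS, hswap x hx, hPF x, ← hd]
    by_cases hPpos : 0 < ∫ y, F x y ∂μ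
    · have hcs := cs_aux hFposx hdi hq hFx hPpos
      rw [div_le_iff₀ hPpos]
      have h4 := mul_le_mul_of_nonneg_left hcs hc.le
      nlinarith [h4]
    · push_neg at hPpos
      have hnum : 0 ≤ (1 - x ^ 2) * (∫ y, d y ∂μ) ^ 2 := mul_nonneg hc.le (sq_nonneg _)
      have hle : (1 - x ^ 2) * (∫ y, d y ∂μ) ^ 2 / (∫ y, F x y ∂μ) ≤ 0 :=
        div_nonpos_of_nonneg_of_nonpos hnum hPpos
      exact hle.trans (mul_nonneg hc.le hI0)
  -- assemble
  rw [hfun, integral_add hIntA hIntAswap, integral_prod_swap A]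
  have hmain : ∫ x, (1 - x ^ 2) * (deriv PF x) ^ 2 / PF x ∂μ ≤ ∫ p, A p ∂(μ.prod μ) := by
    rw [integral_prod A hIntA]
    exact integral_mono_ae hI2 hIntA.integral_prod_left hptwise
  linarith
end

section
/- Let (E, 𝓐, μ) be a σ-finite measure space and let F : E×E → (0,∞) be a measurable symmetric (F(x,y) = F(y,x)) probability density with respect to μ⊗μ such that F·log F is (μ⊗μ)-integrable and (Π_μ F)·log(Π_μ F) is μ-integrable, where Π_μ F(x) = ∫_E F(x,y) dμ(y). Then H(F) ≥ 2·h(Π_μ F), i.e., ∫_{E×E} F·log F d(μ⊗μ) ≥ 2·∫_E (Π_μ F)·log(Π_μ F) dμ. -/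
/-!
Write `P` for the marginal `Π_μ F`. Gibbs' inequality `a log b - b ≤ a log a - a`, applied
pointwise with `a = F(x, y)` and `b = P(x) P(y)` and integrated, gives
`∫ F (log P(x) + log P(y)) - 1 ≤ H(F) - 1`, since both `F` and `P ⊗ P` have total mass one.
By Fubini `∫ F(x, y) log P(x) = h(P)`, and by the symmetry of `F` the same holds for
`∫ F(x, y) log P(y)`; so `H(F) - 2 h(P)` is the (nonnegative) relative entropy of `F` with respect
to `P ⊗ P`.
-/

open MeasureTheory Real

lemma Real.mul_log_sub_le_mul_log_sub {a b : ℝ} (ha : 0 ≤ a) (hb : 0 < b) :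
    a * log b - b ≤ a * log a - a := by
  rcases ha.eq_or_lt with rfl | ha
  · simpa using hb.le
  have hlog : log b - log a ≤ b / a - 1 := by
    rw [← log_div hb.ne' ha.ne']
    exact log_le_sub_one_of_pos (div_pos hb ha)
  have := mul_le_mul_of_nonneg_left hlog ha.le
  rw [mul_sub_one, mul_div_cancel₀ b ha.ne'] at this
  linarith

section Gibbs

variable {α : Type*} [MeasurableSpace α] {μ : Measure α} {f g : α → ℝ}

theorem integral_mul_log_sub_le_integral_mul_log_sub (hf0 : 0 ≤ᵐ[μ] f)
    (hg0 : ∀ᵐ x ∂μ, 0 < g x) (hf : Integrable f μ) (hg : Integrable g μ)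
    (hfg : Integrable (fun x => f x * log (g x)) μ)
    (hff : Integrable (fun x => f x * log (f x)) μ) :
    ∫ x, f x * log (g x) ∂μ - ∫ x, g x ∂μ ≤ ∫ x, f x * log (f x) ∂μ - ∫ x, f x ∂μ := by
  rw [← integral_sub hfg hg, ← integral_sub hff hf]
  refine integral_mono_ae (hfg.sub hg) (hff.sub hf) ?_
  filter_upwards [hf0, hg0] with x hfx hgx
  exact mul_log_sub_le_mul_log_sub hfx hgx

end Gibbs

section Marginal

variable {α β : Type*} [MeasurableSpace α] [MeasurableSpace β] {μ : Measure α} {ν : Measure β}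
  [SFinite μ] [SFinite ν] {F : α × β → ℝ} {g : α → ℝ}

lemma integrable_prod_mul_comp_fst (hF0 : ∀ p, 0 ≤ F p)
    (hF : Integrable F (μ.prod ν)) (hg : AEStronglyMeasurable g μ)
    (hFg : Integrable (fun x => (∫ y, F (x, y) ∂ν) * g x) μ) :
    Integrable (fun p => F p * g p.1) (μ.prod ν) := by
  refine (integrable_prod_iff (f := fun p => F p * g p.1)
    (hF.aestronglyMeasurable.mul hg.comp_fst)).2
    ⟨hF.prod_right_ae.mono fun x hx => hx.mul_const (g x), hFg.norm.congr ?_⟩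
  filter_upwards with x
  simp only [norm_mul, integral_mul_const, Real.norm_eq_abs, abs_of_nonneg (hF0 _),
    abs_of_nonneg (integral_nonneg (f := fun y => F (x, y)) fun y => hF0 (x, y))]

lemma integral_prod_mul_comp_fst (hFg : Integrable (fun p => F p * g p.1) (μ.prod ν)) :
    ∫ p, F p * g p.1 ∂(μ.prod ν) = ∫ x, (∫ y, F (x, y) ∂ν) * g x ∂μ := by
  simp_rw [integral_prod _ hFg, integral_mul_const]

lemma ae_integral_pos_of_pos (hν : ν ≠ 0) (hF0 : ∀ p, 0 < F p)
    (hF : Integrable F (μ.prod ν)) : ∀ᵐ x ∂μ, 0 < ∫ y, F (x, y) ∂ν := by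
  filter_upwards [hF.prod_right_ae] with x hx
  refine (integral_pos_iff_support_of_nonneg (fun y => (hF0 _).le) hx).2 ?_
  rw [Function.support_eq_univ fun y => (hF0 (x, y)).ne']
  exact Measure.measure_univ_pos.2 hν

end Marginal

section Symmetric

variable {α : Type*} {F : α × α → ℝ} {g : α → ℝ}

lemma mul_comp_snd_eq_comp_swap (hF : ∀ x y, F (x, y) = F (y, x)) :
    (fun p => F p * g p.2) = (fun p => F p * g p.1) ∘ Prod.swap := by
  ext ⟨x, y⟩
  simp [hF x y]

variable [MeasurableSpace α] {μ : Measure α} [SFinite μ]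

lemma integrable_mul_comp_snd_of_symm (hF : ∀ x y, F (x, y) = F (y, x))
    (hFg : Integrable (fun p => F p * g p.1) (μ.prod μ)) :
    Integrable (fun p => F p * g p.2) (μ.prod μ) := by
  rw [mul_comp_snd_eq_comp_swap hF]
  exact hFg.swap

lemma integral_mul_comp_snd_of_symm (hF : ∀ x y, F (x, y) = F (y, x)) :
    ∫ p, F p * g p.2 ∂(μ.prod μ) = ∫ p, F p * g p.1 ∂(μ.prod μ) := by
  rw [mul_comp_snd_eq_comp_swap hF]
  exact integral_prod_swap (fun p => F p * g p.1)

end Symmetric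

theorem entropy_projection_ge_general {E : Type*} [MeasurableSpace E]
    (μ : Measure E) [SigmaFinite μ]
    (F : E × E → ℝ) (hFpos : ∀ p, 0 < F p)
    (hFsymm : ∀ x y, F (x, y) = F (y, x))
    (hFint : Integrable F (μ.prod μ)) (hF1 : ∫ p, F p ∂(μ.prod μ) = 1)
    (hFent : Integrable (fun p => F p * Real.log (F p)) (μ.prod μ))
    (hPent : Integrable
      (fun x => (∫ y, F (x, y) ∂μ) * Real.log (∫ y, F (x, y) ∂μ)) μ) :
    ∫ p, F p * Real.log (F p) ∂(μ.prod μ)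
      ≥ 2 * ∫ x, (∫ y, F (x, y) ∂μ) * Real.log (∫ y, F (x, y) ∂μ) ∂μ := by
  set P : E → ℝ := fun x => ∫ y, F (x, y) ∂μ
  have hμ : μ ≠ 0 := by rintro rfl; simp at hF1
  have hPint : Integrable P μ := hFint.integral_prod_left
  have hP1 : ∫ x, P x ∂μ = 1 := by rw [← integral_prod _ hFint, hF1]
  have hPpos : ∀ᵐ x ∂μ, 0 < P x := ae_integral_pos_of_pos hμ hFpos hFint
  have hPP : ∀ᵐ p ∂(μ.prod μ), 0 < P p.1 ∧ 0 < P p.2 :=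
    (Measure.quasiMeasurePreserving_fst.ae hPpos).and
      (Measure.quasiMeasurePreserving_snd.ae hPpos)
  have hint₁ : Integrable (fun p => F p * log (P p.1)) (μ.prod μ) :=
    integrable_prod_mul_comp_fst (fun p => (hFpos p).le) hFint
      (measurable_log.comp_aemeasurable hPint.aemeasurable).aestronglyMeasurable hPent
  have hint₂ := integrable_mul_comp_snd_of_symm (g := fun x => log (P x)) hFsymm hint₁
  have hlog : (fun p => F p * log (P p.1 * P p.2))
      =ᵐ[μ.prod μ] fun p => F p * log (P p.1) + F p * log (P p.2) := by
    filter_upwards [hPP] with p hp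
    rw [log_mul hp.1.ne' hp.2.ne', mul_add]
  have hcross : ∫ p, F p * log (P p.1 * P p.2) ∂(μ.prod μ) = 2 * ∫ x, P x * log (P x) ∂μ := by
    rw [integral_congr_ae hlog, integral_add hint₁ hint₂,
      integral_mul_comp_snd_of_symm (g := fun x => log (P x)) hFsymm,
      integral_prod_mul_comp_fst (g := fun x => log (P x)) hint₁, two_mul]
  have gibbs := integral_mul_log_sub_le_integral_mul_log_sub
    (Filter.Eventually.of_forall fun p => (hFpos p).le) (hPP.mono fun p hp => mul_pos hp.1 hp.2)
    hFint (hPint.mul_prod hPint) ((hint₁.add hint₂).congr hlog.symm) hFent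
  rw [hcross, integral_prod_mul, hP1, hF1] at gibbs
  linarith

/-- Projection inequality for the entropy: for a symmetric strictly
positive probability density `F` on `E×E` with `F log F` integrable and
`(Π_μ F) log(Π_μ F)` integrable, one has `H(F) ≥ 2 h(Π_μ F)`. -/
theorem entropy_projection_ge {E : Type*} [MeasurableSpace E]
    (μ : Measure E) [SigmaFinite μ]
    (F : E × E → ℝ) (hF : Measurable F) (hFpos : ∀ p, 0 < F p)
    (hFsymm : ∀ x y, F (x, y) = F (y, x))
    (hFint : Integrable F (μ.prod μ)) (hF1 : ∫ p, F p ∂(μ.prod μ) = 1)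
    (hFent : Integrable (fun p => F p * Real.log (F p)) (μ.prod μ))
    (hPent : Integrable
      (fun x => (∫ y, F (x, y) ∂μ) * Real.log (∫ y, F (x, y) ∂μ)) μ) :
    ∫ p, F p * Real.log (F p) ∂(μ.prod μ)
      ≥ 2 * ∫ x, (∫ y, F (x, y) ∂μ) * Real.log (∫ y, F (x, y) ∂μ) ∂μ :=
  entropy_projection_ge_general μ F hFpos hFsymm hFint hF1 hFent hPent
end

section
/- Let s ∈ (0,1), α ∈ (0,1), ε > 0, and let f, g ∈ L¹(ℝ^d) be probability densities. With L_α(x,y) = √α·x − √(1−α)·y and B_α(x,y) = √(1−α)·x + √α·y, the 'mixed term' vanishes: ∫_{ℝ^d}∫_{ℝ^d}∫_{ℝ^d} 1_{{|x̃−x| ≥ ε}}(x̃) · (f(L_α(x̃,y)) − f(L_α(x,y))) · (g(B_α(x̃,y)) − g(B_α(x,y))) / |x − x̃|^{d+2s} dx̃ dy dx = 0, where the triple integral converges absolutely. -/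
open MeasureTheory

/-- `L_α(x,y) = √α·x − √(1−α)·y`. -/
noncomputable def La {d : ℕ} (α : ℝ) (x y : EuclideanSpace ℝ (Fin d)) :
    EuclideanSpace ℝ (Fin d) :=
  Real.sqrt α • x - Real.sqrt (1 - α) • y

/-- `B_α(x,y) = √(1−α)·x + √α·y`. -/
noncomputable def Ba {d : ℕ} (α : ℝ) (x y : EuclideanSpace ℝ (Fin d)) :
    EuclideanSpace ℝ (Fin d) :=
  Real.sqrt (1 - α) • x + Real.sqrt α • y

/-- The integrand of the 'mixed term', as a function of `z = (x, y, x̃)`: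
`1_{{|x̃−x| ≥ ε}}(x̃) (f(L_α(x̃,y)) − f(L_α(x,y)))(g(B_α(x̃,y)) − g(B_α(x,y)))/|x−x̃|^{d+2s}`. -/
noncomputable def mixedIntegrand {d : ℕ} (s α ε : ℝ)
    (f g : EuclideanSpace ℝ (Fin d) → ℝ)
    (z : EuclideanSpace ℝ (Fin d) × EuclideanSpace ℝ (Fin d) × EuclideanSpace ℝ (Fin d)) :
    ℝ :=
  if ε ≤ ‖z.2.2 - z.1‖ then
    (f (La α z.2.2 z.2.1) - f (La α z.1 z.2.1))
      * (g (Ba α z.2.2 z.2.1) - g (Ba α z.1 z.2.1))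
      / ‖z.1 - z.2.2‖ ^ ((d : ℝ) + 2 * s)
  else 0

section MixedAux

variable {d : ℕ}

local notation "𝕍" => EuclideanSpace ℝ (Fin d)

/-- The truncated kernel `h ↦ 1_{ε ≤ ‖h‖} ‖h‖^{-P}`. -/
noncomputable def kkAux (d : ℕ) (P ε : ℝ) (h : EuclideanSpace ℝ (Fin d)) : ℝ :=
  if ε ≤ ‖h‖ then ‖h‖ ^ (-P) else 0

/-- The separated integrand `f(u) g(v) k(h)`. -/
noncomputable def FfAux (d : ℕ) (P ε : ℝ) (f g : EuclideanSpace ℝ (Fin d) → ℝ)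
    (w : EuclideanSpace ℝ (Fin d) × EuclideanSpace ℝ (Fin d) × EuclideanSpace ℝ (Fin d)) : ℝ :=
  f w.1 * (g w.2.1 * kkAux d P ε w.2.2)

lemma kkAux_meas (P ε : ℝ) : Measurable (kkAux d P ε) := by
  unfold kkAux
  exact Measurable.ite (isClosed_le continuous_const continuous_norm).measurableSet
    (by fun_prop) measurable_const

lemma kkAux_int {P ε : ℝ} (hP : (d : ℝ) < P) (hε : 0 < ε) :
    Integrable (kkAux d P ε) := by
  have hP0 : (0 : ℝ) ≤ P := le_trans (Nat.cast_nonneg d) hP.le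
  have hfr : (Module.finrank ℝ 𝕍 : ℝ) < P := by
    rw [finrank_euclideanSpace_fin]; exact hP
  have base : Integrable (fun x : 𝕍 => (1 + ‖x‖) ^ (-P)) volume :=
    integrable_one_add_norm hfr
  refine (base.const_mul ((1 + ε⁻¹) ^ P)).mono'
    (kkAux_meas P ε).aestronglyMeasurable (Filter.Eventually.of_forall fun h => ?_)
  unfold kkAux
  by_cases hc : ε ≤ ‖h‖
  · rw [if_pos hc]
    have hn : (0 : ℝ) < ‖h‖ := lt_of_lt_of_le hε hc
    rw [Real.norm_eq_abs, abs_of_nonneg (Real.rpow_nonneg (norm_nonneg h) _)]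
    have key : (1 + ‖h‖) ^ P ≤ (1 + ε⁻¹) ^ P * ‖h‖ ^ P := by
      have h2 : (1 : ℝ) ≤ ε⁻¹ * ‖h‖ := by
        have := (one_le_div hε).mpr hc
        rwa [div_eq_inv_mul] at this
      have h1 : 1 + ‖h‖ ≤ (1 + ε⁻¹) * ‖h‖ := by nlinarith [norm_nonneg (E := 𝕍) h]
      calc (1 + ‖h‖) ^ P ≤ ((1 + ε⁻¹) * ‖h‖) ^ P :=
            Real.rpow_le_rpow (by positivity) h1 hP0
        _ = (1 + ε⁻¹) ^ P * ‖h‖ ^ P := Real.mul_rpow (by positivity) (norm_nonneg h)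
    have hx : (0 : ℝ) < ‖h‖ ^ P := Real.rpow_pos_of_pos hn P
    have hy : (0 : ℝ) < (1 + ‖h‖) ^ P := Real.rpow_pos_of_pos (by positivity) P
    rw [Real.rpow_neg (norm_nonneg h), Real.rpow_neg (by positivity : (0:ℝ) ≤ 1 + ‖h‖),
      ← div_eq_mul_inv, inv_eq_one_div, div_le_div_iff₀ hx hy]
    linarith [key]
  · rw [if_neg hc]
    simp only [norm_zero]
    positivity

lemma FfAux_int {P ε : ℝ} {f g : 𝕍 → ℝ} (hf : Integrable f) (hg : Integrable g)
    (hk : Integrable (kkAux d P ε)) :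
    Integrable (FfAux d P ε f g)
      ((volume : Measure 𝕍).prod ((volume : Measure 𝕍).prod volume)) :=
  hf.mul_prod (hg.mul_prod hk)

lemma FfAux_integral {P ε : ℝ} {f g : 𝕍 → ℝ} :
    ∫ w, FfAux d P ε f g w ∂((volume : Measure 𝕍).prod ((volume : Measure 𝕍).prod volume))
      = (∫ x, f x) * ((∫ x, g x) * ∫ x, kkAux d P ε x) := by
  have h2 : ∫ p : 𝕍 × 𝕍, g p.1 * kkAux d P ε p.2 ∂((volume : Measure 𝕍).prod volume)
      = (∫ x, g x) * ∫ x, kkAux d P ε x := integral_prod_mul g (kkAux d P ε)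
  have h1 := integral_prod_mul (μ := (volume : Measure 𝕍))
    (ν := (volume : Measure 𝕍).prod volume) f (fun p => g p.1 * kkAux d P ε p.2)
  rw [h2] at h1
  exact h1

lemma mpShearSnd {β : Type*} [MeasurableSpace β] {ν : Measure β} [SFinite ν]
    (c : β → 𝕍) (hc : Measurable c) :
    MeasurePreserving (fun p : β × 𝕍 => (p.1, p.2 + c p.1)) (ν.prod volume) (ν.prod volume) :=
  MeasurePreserving.skew_product (g := fun a y => y + c a) (MeasurePreserving.id ν)
    (measurable_snd.add (hc.comp measurable_fst))
    (Filter.Eventually.of_forall fun a => (measurePreserving_add_right volume (c a)).map_eq)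

lemma mpShearFst {β : Type*} [MeasurableSpace β] {ν : Measure β} [SFinite ν]
    (c : β → 𝕍) (hc : Measurable c) :
    MeasurePreserving (fun p : 𝕍 × β => (p.1 + c p.2, p.2)) (volume.prod ν) (volume.prod ν) := by
  have h : (fun p : 𝕍 × β => (p.1 + c p.2, p.2))
      = Prod.swap ∘ (fun p : β × 𝕍 => (p.1, p.2 + c p.1)) ∘ Prod.swap := rfl
  rw [h]
  exact Measure.measurePreserving_swap.comp ((mpShearSnd c hc).comp Measure.measurePreserving_swap)

lemma mpRot {a b : ℝ} (hb : b ≠ 0) (hab : a ^ 2 + b ^ 2 = 1) :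
    MeasurePreserving (fun p : 𝕍 × 𝕍 => (a • p.1 - b • p.2, b • p.1 + a • p.2))
      (volume.prod volume) (volume.prod volume) := by
  obtain ⟨t, h1⟩ : ∃ t : ℝ, t * b = a - 1 := ⟨(a - 1) / b, div_mul_cancel₀ _ hb⟩
  have h2 : 2 * t + b * t ^ 2 = -b := by
    have h3 : b * (2 * t + b * t ^ 2) = b * (-b) := by
      calc b * (2 * t + b * t ^ 2) = 2 * (t * b) + (t * b) ^ 2 := by ring
        _ = 2 * (a - 1) + (a - 1) ^ 2 := by rw [h1]
        _ = a ^ 2 - 1 := by ring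
        _ = -(b ^ 2) := by linarith
        _ = b * (-b) := by ring
    exact mul_left_cancel₀ hb h3
  have key : (fun p : 𝕍 × 𝕍 => (a • p.1 - b • p.2, b • p.1 + a • p.2))
      = (fun p : 𝕍 × 𝕍 => (p.1 + t • p.2, p.2))
        ∘ (fun p : 𝕍 × 𝕍 => (p.1, p.2 + b • p.1))
        ∘ (fun p : 𝕍 × 𝕍 => (p.1 + t • p.2, p.2)) := by
    funext p
    simp only [Function.comp_apply, Prod.mk.injEq]
    constructor
    · match_scalars
      · linear_combination (-1 : ℝ) * h1
      · linear_combination (-1 : ℝ) * h2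
    · match_scalars
      · ring
      · linear_combination (-1 : ℝ) * h1
  rw [key]
  exact (mpShearFst (fun v : 𝕍 => t • v) (measurable_id.const_smul t)).comp
    ((mpShearSnd (fun u : 𝕍 => b • u) (measurable_id.const_smul b)).comp
      (mpShearFst (fun v : 𝕍 => t • v) (measurable_id.const_smul t)))

set_option maxHeartbeats 1000000 in
theorem mixed_core {s α ε : ℝ} (hs0 : 0 < s)
    (hα0 : 0 < α) (hα1 : α < 1) (hε : 0 < ε)
    (f g : 𝕍 → ℝ) (hfm : Measurable f) (hgm : Measurable g)
    (hfL1 : Integrable f) (hgL1 : Integrable g) :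
    Integrable (mixedIntegrand s α ε f g) volume
      ∧ ∫ z, mixedIntegrand s α ε f g z = 0 := by
  have h1α : (0 : ℝ) < 1 - α := by linarith
  have hb : Real.sqrt (1 - α) ≠ 0 := ne_of_gt (Real.sqrt_pos.mpr h1α)
  have hab : Real.sqrt α ^ 2 + Real.sqrt (1 - α) ^ 2 = 1 := by
    rw [Real.sq_sqrt hα0.le, Real.sq_sqrt h1α.le]; ring
  have hki : Integrable (kkAux d ((d : ℝ) + 2 * s) ε) :=
    kkAux_int (by linarith) hε
  -- the shift `(x, y, x̃) ↦ (x, y, x̃ - x)`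
  have hS1 : MeasurePreserving (fun z : 𝕍 × 𝕍 × 𝕍 => (z.1, (z.2.1, z.2.2 - z.1)))
      ((volume : Measure 𝕍).prod ((volume : Measure 𝕍).prod volume))
      ((volume : Measure 𝕍).prod ((volume : Measure 𝕍).prod volume)) :=
    MeasurePreserving.skew_product
      (g := fun (x : 𝕍) (w : 𝕍 × 𝕍) => (w.1, w.2 - x))
      (MeasurePreserving.id (volume : Measure 𝕍))
      ((measurable_snd.fst).prodMk (measurable_snd.snd.sub measurable_fst))
      (Filter.Eventually.of_forall fun x =>
        ((MeasurePreserving.id (volume : Measure 𝕍)).prod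
          (measurePreserving_sub_right volume x)).map_eq)
  -- the rotation
  have hRot : MeasurePreserving (fun p : 𝕍 × 𝕍 => (La α p.1 p.2, Ba α p.1 p.2))
      ((volume : Measure 𝕍).prod volume) ((volume : Measure 𝕍).prod volume) :=
    mpRot hb hab
  have hA := measurePreserving_prodAssoc (volume : Measure 𝕍) (volume : Measure 𝕍) (volume : Measure 𝕍)
  have hA' := MeasurePreserving.symm MeasurableEquiv.prodAssoc hA
  have hRot3 : MeasurePreserving
      (fun z : 𝕍 × 𝕍 × 𝕍 => (La α z.1 z.2.1, (Ba α z.1 z.2.1, z.2.2)))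
      ((volume : Measure 𝕍).prod ((volume : Measure 𝕍).prod volume))
      ((volume : Measure 𝕍).prod ((volume : Measure 𝕍).prod volume)) := by
    exact hA.comp ((hRot.prod (MeasurePreserving.id (volume : Measure 𝕍))).comp hA')
  have hSh3 : MeasurePreserving
      (fun p : 𝕍 × 𝕍 × 𝕍 => (p.1 + Real.sqrt α • p.2.2, p.2))
      ((volume : Measure 𝕍).prod ((volume : Measure 𝕍).prod volume))
      ((volume : Measure 𝕍).prod ((volume : Measure 𝕍).prod volume)) :=
    mpShearFst (fun w : 𝕍 × 𝕍 => Real.sqrt α • w.2) (by exact measurable_snd.const_smul (Real.sqrt α))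
  have hSh4 : MeasurePreserving
      (fun p : 𝕍 × 𝕍 × 𝕍 => (p.1, (p.2.1 + Real.sqrt (1 - α) • p.2.2, p.2.2)))
      ((volume : Measure 𝕍).prod ((volume : Measure 𝕍).prod volume))
      ((volume : Measure 𝕍).prod ((volume : Measure 𝕍).prod volume)) :=
    MeasurePreserving.skew_product
      (g := fun (u : 𝕍) (w : 𝕍 × 𝕍) => (w.1 + Real.sqrt (1 - α) • w.2, w.2))
      (MeasurePreserving.id (volume : Measure 𝕍))
      (by exact (((measurable_snd.fst).add ((measurable_snd.snd).const_smul (Real.sqrt (1 - α)))).prodMk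
        measurable_snd.snd))
      (Filter.Eventually.of_forall fun u =>
        (mpShearFst (fun h : 𝕍 => Real.sqrt (1 - α) • h) (by exact measurable_id.const_smul (Real.sqrt (1 - α)))).map_eq)
  -- the four composite maps
  have hρ4 : MeasurePreserving
      (fun z : 𝕍 × 𝕍 × 𝕍 => (La α z.1 z.2.1, (Ba α z.1 z.2.1, z.2.2 - z.1)))
      ((volume : Measure 𝕍).prod ((volume : Measure 𝕍).prod volume))
      ((volume : Measure 𝕍).prod ((volume : Measure 𝕍).prod volume)) :=
    hRot3.comp hS1
  have hρ2 : MeasurePreserving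
      (fun z : 𝕍 × 𝕍 × 𝕍 => (La α z.2.2 z.2.1, (Ba α z.1 z.2.1, z.2.2 - z.1)))
      ((volume : Measure 𝕍).prod ((volume : Measure 𝕍).prod volume))
      ((volume : Measure 𝕍).prod ((volume : Measure 𝕍).prod volume)) := by
    have h := hSh3.comp hρ4
    have he : (fun z : 𝕍 × 𝕍 × 𝕍 => (La α z.2.2 z.2.1, (Ba α z.1 z.2.1, z.2.2 - z.1)))
        = (fun p : 𝕍 × 𝕍 × 𝕍 => (p.1 + Real.sqrt α • p.2.2, p.2))
          ∘ (fun z : 𝕍 × 𝕍 × 𝕍 => (La α z.1 z.2.1, (Ba α z.1 z.2.1, z.2.2 - z.1))) := by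
      funext z
      simp [Function.comp_apply, La, Ba, Prod.mk.injEq]
      all_goals module
    rw [he]
    exact h
  have hρ3 : MeasurePreserving
      (fun z : 𝕍 × 𝕍 × 𝕍 => (La α z.1 z.2.1, (Ba α z.2.2 z.2.1, z.2.2 - z.1)))
      ((volume : Measure 𝕍).prod ((volume : Measure 𝕍).prod volume))
      ((volume : Measure 𝕍).prod ((volume : Measure 𝕍).prod volume)) := by
    have h := hSh4.comp hρ4
    have he : (fun z : 𝕍 × 𝕍 × 𝕍 => (La α z.1 z.2.1, (Ba α z.2.2 z.2.1, z.2.2 - z.1)))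
        = (fun p : 𝕍 × 𝕍 × 𝕍 => (p.1, (p.2.1 + Real.sqrt (1 - α) • p.2.2, p.2.2)))
          ∘ (fun z : 𝕍 × 𝕍 × 𝕍 => (La α z.1 z.2.1, (Ba α z.1 z.2.1, z.2.2 - z.1))) := by
      funext z
      simp [Function.comp_apply, La, Ba, Prod.mk.injEq]
      all_goals module
    rw [he]
    exact h
  have hρ1 : MeasurePreserving
      (fun z : 𝕍 × 𝕍 × 𝕍 => (La α z.2.2 z.2.1, (Ba α z.2.2 z.2.1, z.2.2 - z.1)))
      ((volume : Measure 𝕍).prod ((volume : Measure 𝕍).prod volume))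
      ((volume : Measure 𝕍).prod ((volume : Measure 𝕍).prod volume)) := by
    have h := hSh3.comp (hSh4.comp hρ4)
    have he : (fun z : 𝕍 × 𝕍 × 𝕍 => (La α z.2.2 z.2.1, (Ba α z.2.2 z.2.1, z.2.2 - z.1)))
        = (fun p : 𝕍 × 𝕍 × 𝕍 => (p.1 + Real.sqrt α • p.2.2, p.2))
          ∘ ((fun p : 𝕍 × 𝕍 × 𝕍 => (p.1, (p.2.1 + Real.sqrt (1 - α) • p.2.2, p.2.2)))
            ∘ (fun z : 𝕍 × 𝕍 × 𝕍 => (La α z.1 z.2.1, (Ba α z.1 z.2.1, z.2.2 - z.1)))) := by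
      funext z
      simp [Function.comp_apply, La, Ba, Prod.mk.injEq]
      constructor <;> module
    rw [he]
    exact h
  -- master lemma : integrability and integral of `FfAux ∘ ρ`
  have master : ∀ ρ : 𝕍 × 𝕍 × 𝕍 → 𝕍 × 𝕍 × 𝕍,
      MeasurePreserving ρ
        ((volume : Measure 𝕍).prod ((volume : Measure 𝕍).prod volume))
        ((volume : Measure 𝕍).prod ((volume : Measure 𝕍).prod volume)) →
      Integrable (fun z => FfAux d ((d : ℝ) + 2 * s) ε f g (ρ z))
          ((volume : Measure 𝕍).prod ((volume : Measure 𝕍).prod volume))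
        ∧ ∫ z, FfAux d ((d : ℝ) + 2 * s) ε f g (ρ z)
            ∂((volume : Measure 𝕍).prod ((volume : Measure 𝕍).prod volume))
          = (∫ x, f x) * ((∫ x, g x) * ∫ x, kkAux d ((d : ℝ) + 2 * s) ε x) := by
    intro ρ hρ
    have hFint : Integrable (FfAux d ((d : ℝ) + 2 * s) ε f g)
        ((volume : Measure 𝕍).prod ((volume : Measure 𝕍).prod volume)) :=
      FfAux_int hfL1 hgL1 hki
    have hFsm : AEStronglyMeasurable (FfAux d ((d : ℝ) + 2 * s) ε f g)
        (Measure.map ρ ((volume : Measure 𝕍).prod ((volume : Measure 𝕍).prod volume))) := by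
      rw [hρ.map_eq]; exact hFint.aestronglyMeasurable
    constructor
    · exact (integrable_map_measure hFsm hρ.measurable.aemeasurable).mp
        (by rw [hρ.map_eq]; exact hFint)
    · have h := integral_map hρ.measurable.aemeasurable hFsm
      rw [hρ.map_eq] at h
      rw [← h]
      exact FfAux_integral
  obtain ⟨hI1, hE1⟩ := master _ hρ1
  obtain ⟨hI2, hE2⟩ := master _ hρ2
  obtain ⟨hI3, hE3⟩ := master _ hρ3
  obtain ⟨hI4, hE4⟩ := master _ hρ4
  -- pointwise identity
  have hmix : mixedIntegrand s α ε f g = fun z : 𝕍 × 𝕍 × 𝕍 =>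
      FfAux d ((d : ℝ) + 2 * s) ε f g (La α z.2.2 z.2.1, (Ba α z.2.2 z.2.1, z.2.2 - z.1))
      - FfAux d ((d : ℝ) + 2 * s) ε f g (La α z.2.2 z.2.1, (Ba α z.1 z.2.1, z.2.2 - z.1))
      - FfAux d ((d : ℝ) + 2 * s) ε f g (La α z.1 z.2.1, (Ba α z.2.2 z.2.1, z.2.2 - z.1))
      + FfAux d ((d : ℝ) + 2 * s) ε f g (La α z.1 z.2.1, (Ba α z.1 z.2.1, z.2.2 - z.1)) := by
    funext z
    by_cases hc : ε ≤ ‖z.2.2 - z.1‖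
    · simp only [mixedIntegrand, FfAux, kkAux, if_pos hc]
      rw [norm_sub_rev z.1 z.2.2, Real.rpow_neg (norm_nonneg _), div_eq_mul_inv]
      ring
    · simp only [mixedIntegrand, FfAux, kkAux, if_neg hc]
      ring
  have hvol : (volume : Measure (𝕍 × 𝕍 × 𝕍))
      = (volume : Measure 𝕍).prod ((volume : Measure 𝕍).prod volume) := by
    rw [Measure.volume_eq_prod, Measure.volume_eq_prod]
  constructor
  · rw [hmix, hvol]
    exact ((hI1.sub hI2).sub hI3).add hI4
  · rw [hmix]
    have : ∫ z, (FfAux d ((d : ℝ) + 2 * s) ε f g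
          (La α z.2.2 z.2.1, (Ba α z.2.2 z.2.1, z.2.2 - z.1))
        - FfAux d ((d : ℝ) + 2 * s) ε f g (La α z.2.2 z.2.1, (Ba α z.1 z.2.1, z.2.2 - z.1))
        - FfAux d ((d : ℝ) + 2 * s) ε f g (La α z.1 z.2.1, (Ba α z.2.2 z.2.1, z.2.2 - z.1))
        + FfAux d ((d : ℝ) + 2 * s) ε f g (La α z.1 z.2.1, (Ba α z.1 z.2.1, z.2.2 - z.1)))
        ∂((volume : Measure 𝕍).prod ((volume : Measure 𝕍).prod volume)) = 0 := by
      have h12 : Integrable (fun z : 𝕍 × 𝕍 × 𝕍 =>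
          FfAux d ((d : ℝ) + 2 * s) ε f g (La α z.2.2 z.2.1, (Ba α z.2.2 z.2.1, z.2.2 - z.1))
          - FfAux d ((d : ℝ) + 2 * s) ε f g (La α z.2.2 z.2.1, (Ba α z.1 z.2.1, z.2.2 - z.1)))
          ((volume : Measure 𝕍).prod ((volume : Measure 𝕍).prod volume)) := hI1.sub hI2
      have h123 : Integrable (fun z : 𝕍 × 𝕍 × 𝕍 =>
          FfAux d ((d : ℝ) + 2 * s) ε f g (La α z.2.2 z.2.1, (Ba α z.2.2 z.2.1, z.2.2 - z.1))
          - FfAux d ((d : ℝ) + 2 * s) ε f g (La α z.2.2 z.2.1, (Ba α z.1 z.2.1, z.2.2 - z.1))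
          - FfAux d ((d : ℝ) + 2 * s) ε f g (La α z.1 z.2.1, (Ba α z.2.2 z.2.1, z.2.2 - z.1)))
          ((volume : Measure 𝕍).prod ((volume : Measure 𝕍).prod volume)) := h12.sub hI3
      rw [integral_add h123 hI4, integral_sub h12 hI3, integral_sub hI1 hI2,
        hE1, hE2, hE3, hE4]
      ring
    rw [hvol]
    exact this
  
end MixedAux

/-- The 'mixed term' in the proof of the fractional Blachman–Stam
inequality converges absolutely and vanishes. -/
theorem mixed_term_vanishes
    {d : ℕ} (s : ℝ) (hs : s ∈ Set.Ioo (0 : ℝ) 1)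
    (α : ℝ) (hα : α ∈ Set.Ioo (0 : ℝ) 1) (ε : ℝ) (hε : 0 < ε)
    (f g : EuclideanSpace ℝ (Fin d) → ℝ)
    (hfm : Measurable f) (hgm : Measurable g)
    (hf0 : ∀ x, 0 ≤ f x) (hg0 : ∀ x, 0 ≤ g x)
    (hfL1 : Integrable f) (hgL1 : Integrable g)
    (hf1 : ∫ x, f x = 1) (hg1 : ∫ x, g x = 1) :
    Integrable (mixedIntegrand s α ε f g) volume
      ∧ ∫ z, mixedIntegrand s α ε f g z = 0 :=
  mixed_core hs.1 hα.1 hα.2 hε f g hfm hgm hfL1 hgL1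
end
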